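/- arXiv:2602.04267 — 2 statements merged into one kernel-verified Lean document; each statement's English description precedes it below -/
import Mathlib

section
/- Let n ≥ 5, ε > 0, u_ε(x) = (ε/(ε²+|x|²))^{(n−4)/2} on ℝⁿ, and let X be a smooth vector field on ℝⁿ. Define w(x) = X_i(x) ∂_i u_ε(x) + ((n−4)/(2n)) (div X)(x) u_ε(x) and S = 𝓛_X g_e − (2/n)(div X) g_e (the traceless part of the Lie derivative of the Euclidean metric). Then w solves the linearized equation Δ² w − ((n+4)/(n−4))·𝔠(n)·u_ε^{8/(n−4)} w = −DP_{g_e}[S] u_ε, where DP_{g_e}[S] is the linearization of the Paneitz operator at the Euclidean metric in direction S. -/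
open scoped BigOperators

/-- Partial derivative in the `i`-th coordinate direction on `ℝⁿ`. -/
noncomputable def pd {n : ℕ} (i : Fin n) (f : EuclideanSpace ℝ (Fin n) → ℝ) :
    EuclideanSpace ℝ (Fin n) → ℝ :=
  fun x => fderiv ℝ f x (EuclideanSpace.single i 1)

/-- Euclidean Laplacian `Δ f = ∑ᵢ ∂ᵢ∂ᵢ f`. -/
noncomputable def lap {n : ℕ} (f : EuclideanSpace ℝ (Fin n) → ℝ) :
    EuclideanSpace ℝ (Fin n) → ℝ :=
  fun x => ∑ i, pd i (pd i f) x

namespace Tool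
variable {n : ℕ}
abbrev Sm (f : EuclideanSpace ℝ (Fin n) → ℝ) : Prop := ContDiff ℝ (⊤ : ℕ∞) f

theorem sm_pd {f : EuclideanSpace ℝ (Fin n) → ℝ} (hf : Sm f) (i : Fin n) : Sm (pd i f) :=
  (hf.fderiv_right (by simp)).clm_apply contDiff_const

theorem sm_lap {f : EuclideanSpace ℝ (Fin n) → ℝ} (hf : Sm f) : Sm (lap f) := by
  have : Sm (fun x => ∑ i, pd i (pd i f) x) :=
    ContDiff.sum (fun i _ => sm_pd (sm_pd hf i) i)
  exact this

theorem sm_diff {f : EuclideanSpace ℝ (Fin n) → ℝ} (hf : Sm f) : Differentiable ℝ f :=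
  hf.differentiable (by simp)

theorem pd_add {f g : EuclideanSpace ℝ (Fin n) → ℝ} (hf : Sm f) (hg : Sm g) (i : Fin n) :
    pd i (fun x => f x + g x) = fun x => pd i f x + pd i g x := by
  funext x
  simp only [pd]
  rw [fderiv_fun_add (sm_diff hf x) (sm_diff hg x)]
  rfl

theorem pd_sub {f g : EuclideanSpace ℝ (Fin n) → ℝ} (hf : Sm f) (hg : Sm g) (i : Fin n) :
    pd i (fun x => f x - g x) = fun x => pd i f x - pd i g x := by
  funext x
  simp only [pd]
  rw [fderiv_fun_sub (sm_diff hf x) (sm_diff hg x)]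
  rfl

theorem pd_mul {f g : EuclideanSpace ℝ (Fin n) → ℝ} (hf : Sm f) (hg : Sm g) (i : Fin n) :
    pd i (fun x => f x * g x) = fun x => pd i f x * g x + f x * pd i g x := by
  funext x
  simp only [pd]
  rw [fderiv_fun_mul (sm_diff hf x) (sm_diff hg x)]
  simp
  ring

theorem pd_const_mul {f : EuclideanSpace ℝ (Fin n) → ℝ} (hf : Sm f) (c : ℝ) (i : Fin n) :
    pd i (fun x => c * f x) = fun x => c * pd i f x := by
  funext x
  simp only [pd]
  rw [fderiv_const_mul (sm_diff hf x)]
  rfl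

theorem pd_const (c : ℝ) (i : Fin n) : pd i (fun _ : EuclideanSpace ℝ (Fin n) => c) = fun _ => 0 := by
  funext x; simp [pd]

theorem pd_sum {ι : Type*} (s : Finset ι) {F : ι → EuclideanSpace ℝ (Fin n) → ℝ}
    (hF : ∀ j, Sm (F j)) (i : Fin n) :
    pd i (fun x => ∑ j ∈ s, F j x) = fun x => ∑ j ∈ s, pd i (F j) x := by
  funext x
  simp only [pd]
  rw [fderiv_fun_sum (fun j _ => sm_diff (hF j) x)]
  simp

theorem pd_comm {f : EuclideanSpace ℝ (Fin n) → ℝ} (hf : Sm f) (i j : Fin n) :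
    pd i (pd j f) = pd j (pd i f) := by
  funext x
  have hd : ∀ y, HasFDerivAt f (fderiv ℝ f y) y := fun y => (sm_diff hf y).hasFDerivAt
  have hd2 : HasFDerivAt (fderiv ℝ f) (fderiv ℝ (fderiv ℝ f) x) x :=
    ((hf.fderiv_right (m := (⊤ : ℕ∞)) (by simp)).differentiable (by simp) x).hasFDerivAt
  have hsymm := second_derivative_symmetric hd hd2 (EuclideanSpace.single i 1) (EuclideanSpace.single j 1)
  -- pd i (pd j f) x = fderiv (fun y => fderiv f y (e j)) x (e i)
  have h1 : ∀ (v w : EuclideanSpace ℝ (Fin n)),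
      fderiv ℝ (fun y => fderiv ℝ f y v) x w = fderiv ℝ (fderiv ℝ f) x w v := by
    intro v w
    have : HasFDerivAt (fun y => fderiv ℝ f y v)
        ((ContinuousLinearMap.apply ℝ ℝ v).comp (fderiv ℝ (fderiv ℝ f) x)) x :=
      (ContinuousLinearMap.apply ℝ ℝ v).hasFDerivAt.comp x hd2
    rw [this.fderiv]
    rfl
  show fderiv ℝ (fun y => fderiv ℝ f y (EuclideanSpace.single j 1)) x (EuclideanSpace.single i 1)
      = fderiv ℝ (fun y => fderiv ℝ f y (EuclideanSpace.single i 1)) x (EuclideanSpace.single j 1)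
  rw [h1, h1]
  exact hsymm

theorem pd_lap_comm {f : EuclideanSpace ℝ (Fin n) → ℝ} (hf : Sm f) (i : Fin n) :
    pd i (lap f) = lap (pd i f) := by
  have : lap f = fun x => ∑ j, pd j (pd j f) x := rfl
  rw [this, pd_sum Finset.univ (fun j => sm_pd (sm_pd hf j) j) i]
  funext x
  simp only [lap]
  congr 1
  funext j
  rw [pd_comm (sm_pd hf j) i j, pd_comm hf j i]


theorem lap_eq (f : EuclideanSpace ℝ (Fin n) → ℝ) :
    lap f = fun x => ∑ i, pd i (pd i f) x := rfl

theorem sm_sum {ι : Type*} (s : Finset ι) {F : ι → EuclideanSpace ℝ (Fin n) → ℝ}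
    (hF : ∀ j, Sm (F j)) : Sm (fun x => ∑ j ∈ s, F j x) :=
  ContDiff.sum (fun j _ => hF j)

theorem sm_mul {f g : EuclideanSpace ℝ (Fin n) → ℝ} (hf : Sm f) (hg : Sm g) :
    Sm (fun x => f x * g x) := hf.mul hg

theorem sm_add {f g : EuclideanSpace ℝ (Fin n) → ℝ} (hf : Sm f) (hg : Sm g) :
    Sm (fun x => f x + g x) := hf.add hg

theorem sm_sub {f g : EuclideanSpace ℝ (Fin n) → ℝ} (hf : Sm f) (hg : Sm g) :
    Sm (fun x => f x - g x) := hf.sub hg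

theorem sm_const_mul {f : EuclideanSpace ℝ (Fin n) → ℝ} (hf : Sm f) (c : ℝ) :
    Sm (fun x => c * f x) := contDiff_const.mul hf

theorem lap_add {f g : EuclideanSpace ℝ (Fin n) → ℝ} (hf : Sm f) (hg : Sm g) :
    lap (fun x => f x + g x) = fun x => lap f x + lap g x := by
  funext x
  simp only [lap_eq]
  rw [← Finset.sum_add_distrib]
  apply Finset.sum_congr rfl
  intro i _
  rw [pd_add hf hg i, pd_add (sm_pd hf i) (sm_pd hg i) i]

theorem lap_sub {f g : EuclideanSpace ℝ (Fin n) → ℝ} (hf : Sm f) (hg : Sm g) :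
    lap (fun x => f x - g x) = fun x => lap f x - lap g x := by
  funext x
  simp only [lap_eq]
  rw [← Finset.sum_sub_distrib]
  apply Finset.sum_congr rfl
  intro i _
  rw [pd_sub hf hg i, pd_sub (sm_pd hf i) (sm_pd hg i) i]

theorem lap_const_mul {f : EuclideanSpace ℝ (Fin n) → ℝ} (hf : Sm f) (c : ℝ) :
    lap (fun x => c * f x) = fun x => c * lap f x := by
  funext x
  simp only [lap_eq]
  rw [Finset.mul_sum]
  apply Finset.sum_congr rfl
  intro i _
  rw [pd_const_mul hf c i, pd_const_mul (sm_pd hf i) c i]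

theorem lap_sum {ι : Type*} (s : Finset ι) {F : ι → EuclideanSpace ℝ (Fin n) → ℝ}
    (hF : ∀ j, Sm (F j)) :
    lap (fun x => ∑ j ∈ s, F j x) = fun x => ∑ j ∈ s, lap (F j) x := by
  funext x
  simp only [lap_eq]
  rw [Finset.sum_comm]
  apply Finset.sum_congr rfl
  intro i _
  rw [pd_sum s hF i, pd_sum s (fun j => sm_pd (hF j) i) i]

theorem lap_mul {f g : EuclideanSpace ℝ (Fin n) → ℝ} (hf : Sm f) (hg : Sm g) :
    lap (fun x => f x * g x)
      = fun x => lap f x * g x + 2 * (∑ k, pd k f x * pd k g x) + f x * lap g x := by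
  funext x
  simp only [lap_eq]
  have h1 : ∀ i : Fin n, pd i (pd i fun y => f y * g y) x
      = pd i (pd i f) x * g x + pd i f x * pd i g x
        + (pd i f x * pd i g x + f x * pd i (pd i g) x) := by
    intro i
    rw [pd_mul hf hg i, pd_add (sm_mul (sm_pd hf i) hg) (sm_mul hf (sm_pd hg i)) i,
      pd_mul (sm_pd hf i) hg i, pd_mul hf (sm_pd hg i) i]
  rw [Finset.sum_congr rfl (fun i _ => h1 i)]
  rw [Finset.sum_add_distrib, Finset.sum_add_distrib, Finset.sum_add_distrib,
    ← Finset.sum_mul, ← Finset.mul_sum]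
  ring

theorem lap_G {f g : EuclideanSpace ℝ (Fin n) → ℝ} (hf : Sm f) (hg : Sm g) :
    lap (fun x => ∑ k, pd k f x * pd k g x)
      = fun x => (∑ k, pd k (lap f) x * pd k g x)
          + 2 * (∑ i, ∑ j, pd i (pd j f) x * pd i (pd j g) x)
          + (∑ k, pd k f x * pd k (lap g) x) := by
  funext x
  rw [lap_sum Finset.univ (fun k => sm_mul (sm_pd hf k) (sm_pd hg k))]
  have h1 : ∀ k : Fin n, lap (fun y => pd k f y * pd k g y) x
      = lap (pd k f) x * pd k g x + 2 * (∑ i, pd i (pd k f) x * pd i (pd k g) x)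
        + pd k f x * lap (pd k g) x := by
    intro k
    rw [lap_mul (sm_pd hf k) (sm_pd hg k)]
  beta_reduce
  rw [Finset.sum_congr rfl (fun k _ => h1 k)]
  rw [Finset.sum_add_distrib, Finset.sum_add_distrib, ← Finset.mul_sum]
  have e1 : ∀ k : Fin n, lap (pd k f) x = pd k (lap f) x := fun k => by rw [pd_lap_comm hf k]
  have e2 : ∀ k : Fin n, lap (pd k g) x = pd k (lap g) x := fun k => by rw [pd_lap_comm hg k]
  have e3 : (∑ k : Fin n, ∑ i : Fin n, pd i (pd k f) x * pd i (pd k g) x)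
      = ∑ i : Fin n, ∑ j : Fin n, pd i (pd j f) x * pd i (pd j g) x := Finset.sum_comm
  simp only [e1, e2]
  rw [e3]


theorem lap_const (c : ℝ) : lap (fun _ : EuclideanSpace ℝ (Fin n) => c) = fun _ => 0 := by
  funext x
  simp only [lap_eq]
  rw [Finset.sum_congr rfl (fun i (_ : i ∈ Finset.univ) => by rw [pd_const c i, pd_const 0 i])]
  simp

theorem lap_comb4 {f1 f2 f3 f4 : EuclideanSpace ℝ (Fin n) → ℝ}
    (h1 : Sm f1) (h2 : Sm f2) (h3 : Sm f3) (h4 : Sm f4) (c1 c2 : ℝ) :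
    lap (fun x => f1 x - f2 x + c1 * f3 x - c2 * f4 x)
      = fun x => lap f1 x - lap f2 x + c1 * lap f3 x - c2 * lap f4 x := by
  rw [lap_sub (sm_add (sm_sub h1 h2) (sm_const_mul h3 c1)) (sm_const_mul h4 c2),
    lap_add (sm_sub h1 h2) (sm_const_mul h3 c1), lap_sub h1 h2,
    lap_const_mul h3 c1, lap_const_mul h4 c2]

theorem lap_comb2 {f1 f2 : EuclideanSpace ℝ (Fin n) → ℝ}
    (h1 : Sm f1) (h2 : Sm f2) (c : ℝ) :
    lap (fun x => f1 x + c * f2 x) = fun x => lap f1 x + c * lap f2 x := by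
  rw [lap_add h1 (sm_const_mul h2 c), lap_const_mul h2 c]

theorem lap_comb4' {f1 f2 f3 f4 : EuclideanSpace ℝ (Fin n) → ℝ}
    (h1 : Sm f1) (h2 : Sm f2) (h3 : Sm f3) (h4 : Sm f4) (c2 c3 c4 : ℝ) :
    lap (fun x => f1 x + c2 * f2 x + c3 * f3 x + c4 * f4 x)
      = fun x => lap f1 x + c2 * lap f2 x + c3 * lap f3 x + c4 * lap f4 x := by
  rw [lap_add (sm_add (sm_add h1 (sm_const_mul h2 c2)) (sm_const_mul h3 c3)) (sm_const_mul h4 c4),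
    lap_add (sm_add h1 (sm_const_mul h2 c2)) (sm_const_mul h3 c3),
    lap_add h1 (sm_const_mul h2 c2),
    lap_const_mul h2 c2, lap_const_mul h3 c3, lap_const_mul h4 c4]

theorem sum_ite_diag (g : Fin n → Fin n → ℝ) :
    ∑ i, ∑ j, (if i = j then (1:ℝ) else 0) * g i j = ∑ i, g i i := by
  apply Finset.sum_congr rfl
  intro i _
  rw [Finset.sum_eq_single i]
  · simp
  · intro j _ hj
    rw [if_neg (fun h => hj h.symm), zero_mul]
  · intro h; exact absurd (Finset.mem_univ i) h

end Tool

open Tool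

section Master
variable {n : ℕ}

theorem Tlem (hn0 : (n:ℝ) ≠ 0)
    (X : Fin n → EuclideanSpace ℝ (Fin n) → ℝ) (hX : ∀ i, Sm (X i))
    (divX : EuclideanSpace ℝ (Fin n) → ℝ)
    (hdiv : divX = fun x => ∑ i, pd i (X i) x)
    (S : Fin n → Fin n → EuclideanSpace ℝ (Fin n) → ℝ)
    (hS : S = fun i j x => pd i (X j) x + pd j (X i) x
        - 2 / (n:ℝ) * divX x * (if i = j then 1 else 0))
    (ψ : EuclideanSpace ℝ (Fin n) → ℝ) (hψ : Sm ψ) :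
    (fun x => ∑ i, ∑ j, pd i (fun z => S i j z * pd j ψ z) x)
      = fun x => lap (fun y => ∑ j, X j y * pd j ψ y) x
          - (∑ j, X j x * pd j (lap ψ) x)
          + ((n:ℝ)-2)/(n:ℝ) * (∑ k, pd k divX x * pd k ψ x)
          - 2/(n:ℝ) * (divX x * lap ψ x) := by
  have smDiv : Sm divX := by rw [hdiv]; exact sm_sum _ (fun i => sm_pd (hX i) i)
  have smS : ∀ i j, Sm (S i j) := by
    intro i j
    rw [hS]
    exact sm_sub (sm_add (sm_pd (hX j) i) (sm_pd (hX i) j))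
      ((contDiff_const.mul smDiv).mul contDiff_const)
  funext x
  -- Step 1: product rule in each summand
  have e1 : ∀ i j : Fin n, pd i (fun z => S i j z * pd j ψ z) x
      = pd i (S i j) x * pd j ψ x + S i j x * pd i (pd j ψ) x := by
    intro i j
    rw [pd_mul (smS i j) (sm_pd hψ j)]
  -- Step 2: derivative of S i j
  have e2 : ∀ i j : Fin n, pd i (S i j)
      = fun z => pd i (pd i (X j)) z + pd i (pd j (X i)) z
          - (2/(n:ℝ) * (if i = j then (1:ℝ) else 0)) * pd i divX z := by
    intro i j
    have h1 : S i j = fun z => (pd i (X j) z + pd j (X i) z)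
        - (2/(n:ℝ) * (if i = j then (1:ℝ) else 0)) * divX z := by
      rw [hS]; funext z; ring
    rw [h1, pd_sub (sm_add (sm_pd (hX j) i) (sm_pd (hX i) j)) (sm_const_mul smDiv _),
      pd_add (sm_pd (hX j) i) (sm_pd (hX i) j), pd_const_mul smDiv]
  -- expand the LHS
  rw [Finset.sum_congr rfl (fun i (_ : i ∈ Finset.univ) =>
    Finset.sum_congr rfl (fun j (_ : j ∈ Finset.univ) => e1 i j))]
  have e3 : ∀ i j : Fin n, pd i (S i j) x * pd j ψ x + S i j x * pd i (pd j ψ) x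
      = (pd i (pd i (X j)) x * pd j ψ x
          + pd i (pd j (X i)) x * pd j ψ x
          - (2/(n:ℝ) * (if i = j then (1:ℝ) else 0)) * (pd i divX x * pd j ψ x))
        + (pd i (X j) x * pd i (pd j ψ) x
          + pd j (X i) x * pd i (pd j ψ) x
          - (2/(n:ℝ) * (if i = j then (1:ℝ) else 0)) * (divX x * pd i (pd j ψ) x)) := by
    intro i j
    rw [e2 i j, hS]
    ring
  rw [Finset.sum_congr rfl (fun i (_ : i ∈ Finset.univ) =>
    Finset.sum_congr rfl (fun j (_ : j ∈ Finset.univ) => e3 i j))]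
  simp only [Finset.sum_add_distrib, Finset.sum_sub_distrib]
  -- pointwise divergence derivative
  have hpddiv : ∀ j : Fin n, pd j divX = fun y => ∑ i, pd j (pd i (X i)) y := by
    intro j
    rw [hdiv, pd_sum Finset.univ (fun i => sm_pd (hX i) i) j]
  -- A1
  have hA1 : (∑ i : Fin n, ∑ j : Fin n, pd i (pd i (X j)) x * pd j ψ x)
      = ∑ j : Fin n, lap (X j) x * pd j ψ x := by
    rw [Finset.sum_comm]
    apply Finset.sum_congr rfl; intro j _
    rw [← Finset.sum_mul]
    rfl
  -- A2
  have hA2 : (∑ i : Fin n, ∑ j : Fin n, pd i (pd j (X i)) x * pd j ψ x)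
      = ∑ k : Fin n, pd k divX x * pd k ψ x := by
    rw [Finset.sum_comm]
    apply Finset.sum_congr rfl; intro j _
    rw [← Finset.sum_mul, hpddiv j]
    beta_reduce
    congr 1
    apply Finset.sum_congr rfl; intro i _
    rw [pd_comm (hX i) i j]
  -- A3
  have hA3 : (∑ i : Fin n, ∑ j : Fin n,
        (2/(n:ℝ) * if i = j then 1 else 0) * (pd i divX x * pd j ψ x))
      = 2/(n:ℝ) * ∑ k : Fin n, pd k divX x * pd k ψ x := by
    have : ∀ i j : Fin n, (2/(n:ℝ) * if i = j then 1 else 0) * (pd i divX x * pd j ψ x)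
        = 2/(n:ℝ) * ((if i = j then (1:ℝ) else 0) * (pd i divX x * pd j ψ x)) := by
      intro i j; ring
    rw [Finset.sum_congr rfl (fun i (_ : i ∈ Finset.univ) =>
      Finset.sum_congr rfl (fun j (_ : j ∈ Finset.univ) => this i j))]
    simp only [← Finset.mul_sum]
    rw [sum_ite_diag]
  -- A5 = A4
  have hA5 : (∑ i : Fin n, ∑ j : Fin n, pd j (X i) x * pd i (pd j ψ) x)
      = ∑ i : Fin n, ∑ j : Fin n, pd i (X j) x * pd i (pd j ψ) x := by
    rw [Finset.sum_comm]
    apply Finset.sum_congr rfl; intro j _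
    apply Finset.sum_congr rfl; intro i _
    rw [pd_comm hψ i j]
  -- A6
  have hA6 : (∑ i : Fin n, ∑ j : Fin n,
        (2/(n:ℝ) * if i = j then 1 else 0) * (divX x * pd i (pd j ψ) x))
      = 2/(n:ℝ) * (divX x * lap ψ x) := by
    have : ∀ i j : Fin n, (2/(n:ℝ) * if i = j then 1 else 0) * (divX x * pd i (pd j ψ) x)
        = 2/(n:ℝ) * ((if i = j then (1:ℝ) else 0) * (divX x * pd i (pd j ψ) x)) := by
      intro i j; ring
    rw [Finset.sum_congr rfl (fun i (_ : i ∈ Finset.univ) =>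
      Finset.sum_congr rfl (fun j (_ : j ∈ Finset.univ) => this i j))]
    simp only [← Finset.mul_sum]
    rw [sum_ite_diag]
    congr 1
    rw [← Finset.mul_sum]
    rfl
  -- lap of W0
  have hlapW : lap (fun y => ∑ j, X j y * pd j ψ y) x
      = (∑ j : Fin n, lap (X j) x * pd j ψ x)
        + 2 * (∑ i : Fin n, ∑ j : Fin n, pd i (X j) x * pd i (pd j ψ) x)
        + ∑ j : Fin n, X j x * pd j (lap ψ) x := by
    rw [lap_sum Finset.univ (fun j => sm_mul (hX j) (sm_pd hψ j))]
    beta_reduce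
    have hterm : ∀ j : Fin n, lap (fun y => X j y * pd j ψ y) x
        = lap (X j) x * pd j ψ x + 2 * (∑ i, pd i (X j) x * pd i (pd j ψ) x)
          + X j x * pd j (lap ψ) x := by
      intro j
      rw [lap_mul (hX j) (sm_pd hψ j), ← pd_lap_comm hψ j]
    rw [Finset.sum_congr rfl (fun j _ => hterm j)]
    rw [Finset.sum_add_distrib, Finset.sum_add_distrib, ← Finset.mul_sum, Finset.sum_comm]
  rw [hA1, hA2, hA3, hA5, hA6, hlapW]
  field_simp
  ring


theorem sum_ite_single (j : Fin n) (c : ℝ) (g : Fin n → ℝ) :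
    ∑ k, (c * if j = k then (1:ℝ) else 0) * g k = c * g j := by
  rw [Finset.sum_eq_single j]
  · simp
  · intro k _ hk
    rw [if_neg (fun h => hk h.symm)]
    ring
  · intro h; exact absurd (Finset.mem_univ j) h

set_option maxHeartbeats 2000000 in
theorem master (hn : 5 ≤ n)
    (X : Fin n → EuclideanSpace ℝ (Fin n) → ℝ) (hX : ∀ i, Sm (X i))
    (φ : EuclideanSpace ℝ (Fin n) → ℝ) (hφ : Sm φ)
    (divX : EuclideanSpace ℝ (Fin n) → ℝ)
    (S : Fin n → Fin n → EuclideanSpace ℝ (Fin n) → ℝ)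
    (trS DRv : EuclideanSpace ℝ (Fin n) → ℝ)
    (DRicv : Fin n → Fin n → EuclideanSpace ℝ (Fin n) → ℝ)
    (DPv : (EuclideanSpace ℝ (Fin n) → ℝ) → EuclideanSpace ℝ (Fin n) → ℝ)
    (w : EuclideanSpace ℝ (Fin n) → ℝ)
    (hdiv : divX = fun x => ∑ i, pd i (X i) x)
    (hS : S = fun i j x => pd i (X j) x + pd j (X i) x
        - 2 / (n:ℝ) * divX x * (if i = j then 1 else 0))
    (htr : trS = fun x => ∑ i, S i i x)
    (hDR : DRv = fun x => (∑ i, ∑ j, pd i (pd j (S i j)) x) - lap trS x)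
    (hDRic : DRicv = fun i j x => (1 / 2) * ((∑ k, pd k (pd i (S j k)) x)
        + (∑ k, pd k (pd j (S i k)) x) - lap (S i j) x - pd i (pd j trS) x))
    (hDP : DPv = fun φ x =>
      -(lap (fun y => ∑ i, ∑ j, pd i (fun z => S i j z * pd j φ z) y) x)
      - (∑ i, ∑ j, pd i (fun z => S i j z * pd j (lap φ) z) x)
      + (4 / ((n : ℝ) - 2)) * ∑ i, ∑ j, DRicv i j x * pd i (pd j φ) x
      - ((4 + ((n : ℝ) - 2) ^ 2) / (2 * ((n : ℝ) - 2) * ((n : ℝ) - 1))) * DRv x * lap φ x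
      - (((n : ℝ) - 6) / (2 * ((n : ℝ) - 1))) * ∑ k, pd k DRv x * pd k φ x
      - (((n : ℝ) - 4) / (4 * ((n : ℝ) - 1))) * lap DRv x * φ x)
    (hw : w = fun x => (∑ i, X i x * pd i φ x)
        + (((n : ℝ) - 4) / (2 * (n : ℝ))) * divX x * φ x) :
    ∀ x, DPv φ x + lap (lap w) x
      = (∑ j, X j x * pd j (lap (lap φ)) x)
        + (((n:ℝ)+4)/(2*(n:ℝ))) * divX x * lap (lap φ) x := by
  have hn0 : (n:ℝ) ≠ 0 := by
    have : (5:ℝ) ≤ (n:ℝ) := by exact_mod_cast hn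
    linarith
  have hn2 : (n:ℝ) - 2 ≠ 0 := by
    have : (5:ℝ) ≤ (n:ℝ) := by exact_mod_cast hn
    linarith
  have hn1 : (n:ℝ) - 1 ≠ 0 := by
    have : (5:ℝ) ≤ (n:ℝ) := by exact_mod_cast hn
    linarith
  have smDiv : Sm divX := by rw [hdiv]; exact sm_sum _ (fun i => sm_pd (hX i) i)
  have smS : ∀ i j, Sm (S i j) := by
    intro i j
    rw [hS]
    exact sm_sub (sm_add (sm_pd (hX j) i) (sm_pd (hX i) j))
      ((contDiff_const.mul smDiv).mul contDiff_const)
  have hpddiv : ∀ j : Fin n, pd j divX = fun y => ∑ i, pd j (pd i (X i)) y := by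
    intro j
    rw [hdiv, pd_sum Finset.univ (fun i => sm_pd (hX i) i) j]
  -- trace of S vanishes
  have htr0 : trS = fun _ => (0:ℝ) := by
    rw [htr]
    funext y
    have : ∀ i : Fin n, S i i y
        = pd i (X i) y + pd i (X i) y - 2 / (n:ℝ) * divX y := by
      intro i
      rw [hS]
      simp
    rw [Finset.sum_congr rfl (fun i _ => this i)]
    rw [Finset.sum_sub_distrib, Finset.sum_add_distrib, Finset.sum_const,
      Finset.card_univ, Fintype.card_fin]
    have hdy : divX y = ∑ i, pd i (X i) y := by rw [hdiv]
    rw [← hdy]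
    rw [nsmul_eq_mul, ← mul_assoc, mul_div_assoc', mul_comm (n:ℝ) 2, mul_div_assoc, div_self hn0]
    ring
  -- derivative of S entries (generic indices)
  have eS : ∀ a i j : Fin n, pd a (S i j)
      = fun z => pd a (pd i (X j)) z + pd a (pd j (X i)) z
          - (2/(n:ℝ) * (if i = j then (1:ℝ) else 0)) * pd a divX z := by
    intro a i j
    have h1 : S i j = fun z => (pd i (X j) z + pd j (X i) z)
        - (2/(n:ℝ) * (if i = j then (1:ℝ) else 0)) * divX z := by
      rw [hS]; funext z; ring
    rw [h1, pd_sub (sm_add (sm_pd (hX j) i) (sm_pd (hX i) j)) (sm_const_mul smDiv _),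
      pd_add (sm_pd (hX j) i) (sm_pd (hX i) j), pd_const_mul smDiv]
  -- DR[S] = 2(n-1)/n Δ divX
  have hDReq : DRv = fun x => (2*((n:ℝ)-1)/(n:ℝ)) * lap divX x := by
    rw [hDR, htr0, lap_const]
    funext x
    have e4 : ∀ i j : Fin n, pd i (pd j (S i j)) x
        = pd i (pd i (pd j (X j))) x + pd j (pd j (pd i (X i))) x
          - (2/(n:ℝ) * (if i = j then (1:ℝ) else 0)) * pd i (pd j divX) x := by
      intro i j
      rw [eS j i j, pd_sub (sm_add (sm_pd (sm_pd (hX j) i) j) (sm_pd (sm_pd (hX i) j) j))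
          (sm_const_mul (sm_pd smDiv j) _),
        pd_add (sm_pd (sm_pd (hX j) i) j) (sm_pd (sm_pd (hX i) j) j),
        pd_const_mul (sm_pd smDiv j)]
      beta_reduce
      rw [pd_comm (hX j) j i]
      rw [pd_comm (sm_pd (hX i) j) i j, pd_comm (hX i) i j]
    rw [Finset.sum_congr rfl (fun i (_ : i ∈ Finset.univ) =>
      Finset.sum_congr rfl (fun j (_ : j ∈ Finset.univ) => e4 i j))]
    simp only [Finset.sum_add_distrib, Finset.sum_sub_distrib]
    have hppd : ∀ i : Fin n, pd i (pd i divX) = fun y => ∑ j, pd i (pd i (pd j (X j))) y := by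
      intro i
      rw [hpddiv i, pd_sum Finset.univ (fun j => sm_pd (sm_pd (hX j) j) i) i]
    have hD1 : (∑ i : Fin n, ∑ j : Fin n, pd i (pd i (pd j (X j))) x) = lap divX x := by
      have : ∀ i : Fin n, (∑ j : Fin n, pd i (pd i (pd j (X j))) x) = pd i (pd i divX) x := by
        intro i; rw [hppd i]
      rw [Finset.sum_congr rfl (fun i _ => this i)]
      rfl
    have hD2 : (∑ i : Fin n, ∑ j : Fin n, pd j (pd j (pd i (X i))) x) = lap divX x := by
      rw [Finset.sum_comm]
      have : ∀ j : Fin n, (∑ i : Fin n, pd j (pd j (pd i (X i))) x) = pd j (pd j divX) x := by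
        intro j; rw [hppd j]
      rw [Finset.sum_congr rfl (fun j _ => this j)]
      rfl
    have hD3 : (∑ i : Fin n, ∑ j : Fin n,
          (2/(n:ℝ) * if i = j then 1 else 0) * pd i (pd j divX) x)
        = 2/(n:ℝ) * lap divX x := by
      have : ∀ i j : Fin n, (2/(n:ℝ) * if i = j then 1 else 0) * pd i (pd j divX) x
          = 2/(n:ℝ) * ((if i = j then (1:ℝ) else 0) * pd i (pd j divX) x) := by
        intro i j; ring
      rw [Finset.sum_congr rfl (fun i (_ : i ∈ Finset.univ) =>
        Finset.sum_congr rfl (fun j (_ : j ∈ Finset.univ) => this i j))]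
      simp only [← Finset.mul_sum]
      rw [sum_ite_diag]
      rfl
    rw [hD1, hD2, hD3]
    beta_reduce
    field_simp
    ring
  intro x
  -- second-derivative sums of S
  have hppd2 : ∀ i j : Fin n, pd i (pd j divX)
      = fun y => ∑ k, pd i (pd j (pd k (X k))) y := by
    intro i j
    rw [hpddiv j, pd_sum Finset.univ (fun k => sm_pd (sm_pd (hX k) k) j) i]
  have hQ : ∀ i j : Fin n, (∑ k, pd k (pd i (S j k)) x)
      = pd i (pd j divX) x + lap (pd i (X j)) x - 2/(n:ℝ) * pd j (pd i divX) x := by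
    intro i j
    have e5 : ∀ k : Fin n, pd k (pd i (S j k)) x
        = pd i (pd j (pd k (X k))) x + pd k (pd k (pd i (X j))) x
          - (2/(n:ℝ) * (if j = k then (1:ℝ) else 0)) * pd k (pd i divX) x := by
      intro k
      rw [eS i j k, pd_sub (sm_add (sm_pd (sm_pd (hX k) j) i) (sm_pd (sm_pd (hX j) k) i))
          (sm_const_mul (sm_pd smDiv i) _),
        pd_add (sm_pd (sm_pd (hX k) j) i) (sm_pd (sm_pd (hX j) k) i),
        pd_const_mul (sm_pd smDiv i)]
      beta_reduce
      rw [pd_comm (sm_pd (hX k) j) k i, pd_comm (hX k) k j, pd_comm (hX j) i k]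
    rw [Finset.sum_congr rfl (fun k (_ : k ∈ Finset.univ) => e5 k)]
    simp only [Finset.sum_add_distrib, Finset.sum_sub_distrib]
    rw [sum_ite_single j (2/(n:ℝ)) (fun k => pd k (pd i divX) x)]
    have h1 : (∑ k : Fin n, pd i (pd j (pd k (X k))) x) = pd i (pd j divX) x := by
      rw [hppd2 i j]
    have h2 : (∑ k : Fin n, pd k (pd k (pd i (X j))) x) = lap (pd i (X j)) x := rfl
    rw [h1, h2]
  -- pointwise DRic
  have hDRicpt : ∀ i j : Fin n, DRicv i j x
      = (1-2/(n:ℝ)) * pd i (pd j divX) x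
        + (if i = j then (1:ℝ) else 0) * (1/(n:ℝ) * lap divX x) := by
    intro i j
    have hlapS : lap (S i j) x = lap (pd i (X j)) x + lap (pd j (X i)) x
        - (2/(n:ℝ) * (if i = j then (1:ℝ) else 0)) * lap divX x := by
      have h1 : S i j = fun z => (pd i (X j) z + pd j (X i) z)
          - (2/(n:ℝ) * (if i = j then (1:ℝ) else 0)) * divX z := by
        rw [hS]; funext z; ring
      rw [h1, lap_sub (sm_add (sm_pd (hX j) i) (sm_pd (hX i) j)) (sm_const_mul smDiv _),
        lap_add (sm_pd (hX j) i) (sm_pd (hX i) j), lap_const_mul smDiv]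
    have htrpd : pd i (pd j trS) x = 0 := by
      rw [htr0, pd_const, pd_const]
    simp only [hDRic]
    rw [hQ i j, hQ j i, hlapS, htrpd, pd_comm smDiv j i]
    split_ifs <;> (field_simp; ring)
  -- term 3
  have hterm3 : (∑ i, ∑ j, DRicv i j x * pd i (pd j φ) x)
      = (1-2/(n:ℝ)) * (∑ i, ∑ j, pd i (pd j divX) x * pd i (pd j φ) x)
        + 1/(n:ℝ) * lap divX x * lap φ x := by
    have e6 : ∀ i j : Fin n, DRicv i j x * pd i (pd j φ) x
        = (1-2/(n:ℝ)) * (pd i (pd j divX) x * pd i (pd j φ) x)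
          + (if i = j then (1:ℝ) else 0) * (1/(n:ℝ) * lap divX x * pd i (pd j φ) x) := by
      intro i j
      rw [hDRicpt i j]
      ring
    rw [Finset.sum_congr rfl (fun i (_ : i ∈ Finset.univ) =>
      Finset.sum_congr rfl (fun j (_ : j ∈ Finset.univ) => e6 i j))]
    simp only [Finset.sum_add_distrib]
    rw [sum_ite_diag (fun i j => 1/(n:ℝ) * lap divX x * pd i (pd j φ) x)]
    congr 1
    · simp only [Finset.mul_sum]
    · rw [← Finset.mul_sum]
      rfl
  -- term 5
  have hterm5 : (∑ k, pd k DRv x * pd k φ x)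
      = 2*((n:ℝ)-1)/(n:ℝ) * ∑ k, pd k (lap divX) x * pd k φ x := by
    have e7 : ∀ k : Fin n, pd k DRv x * pd k φ x
        = 2*((n:ℝ)-1)/(n:ℝ) * (pd k (lap divX) x * pd k φ x) := by
      intro k
      rw [hDReq, pd_const_mul (sm_lap smDiv)]
      beta_reduce
      ring
    rw [Finset.sum_congr rfl (fun k (_ : k ∈ Finset.univ) => e7 k), ← Finset.mul_sum]
  -- term 4 and 6 atoms
  have hDRvx : DRv x = 2*((n:ℝ)-1)/(n:ℝ) * lap divX x := by rw [hDReq]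
  have hterm6 : lap DRv x = 2*((n:ℝ)-1)/(n:ℝ) * lap (lap divX) x := by
    rw [hDReq, lap_const_mul (sm_lap smDiv)]
  -- smoothness of composite pieces
  have smW0 : Sm (fun y => ∑ j, X j y * pd j φ y) :=
    sm_sum _ (fun j => sm_mul (hX j) (sm_pd hφ j))
  have smW1 : Sm (fun y => ∑ j, X j y * pd j (lap φ) y) :=
    sm_sum _ (fun j => sm_mul (hX j) (sm_pd (sm_lap hφ) j))
  have smG : Sm (fun y => ∑ k, pd k divX y * pd k φ y) :=
    sm_sum _ (fun k => sm_mul (sm_pd smDiv k) (sm_pd hφ k))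
  have smP4 : Sm (fun y => divX y * lap φ y) := sm_mul smDiv (sm_lap hφ)
  have hTφ := Tlem hn0 X hX divX hdiv S hS φ hφ
  have hTl := Tlem hn0 X hX divX hdiv S hS (lap φ) (sm_lap hφ)
  -- first DP term
  have hT1 : lap (fun y => ∑ i, ∑ j, pd i (fun z => S i j z * pd j φ z) y) x
      = lap (lap (fun y => ∑ j, X j y * pd j φ y)) x
        - lap (fun y => ∑ j, X j y * pd j (lap φ) y) x
        + ((n:ℝ)-2)/(n:ℝ) * lap (fun y => ∑ k, pd k divX y * pd k φ y) x
        - 2/(n:ℝ) * lap (fun y => divX y * lap φ y) x := by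
    rw [hTφ, lap_comb4 (sm_lap smW0) smW1 smG smP4]
  -- second DP term
  have hT2 : (∑ i, ∑ j, pd i (fun z => S i j z * pd j (lap φ) z) x)
      = lap (fun y => ∑ j, X j y * pd j (lap φ) y) x
        - (∑ j, X j x * pd j (lap (lap φ)) x)
        + ((n:ℝ)-2)/(n:ℝ) * (∑ k, pd k divX x * pd k (lap φ) x)
        - 2/(n:ℝ) * (divX x * lap (lap φ) x) := by
    have h := congrFun hTl x
    beta_reduce at h
    exact h
  -- pointwise expansions
  have hlapG := congrFun (lap_G smDiv hφ) x
  beta_reduce at hlapG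
  have hlapP4 := congrFun (lap_mul smDiv (sm_lap hφ)) x
  beta_reduce at hlapP4
  have hlapP1 := congrFun (lap_mul (sm_lap smDiv) hφ) x
  beta_reduce at hlapP1
  -- lap w
  have hw2 : w = fun y => (∑ i, X i y * pd i φ y)
      + ((n:ℝ)-4)/(2*(n:ℝ)) * (divX y * φ y) := by
    rw [hw]; funext y; ring
  have hlapw : lap w = fun y => lap (fun z => ∑ i, X i z * pd i φ z) y
      + ((n:ℝ)-4)/(2*(n:ℝ)) * lap (fun z => divX z * φ z) y := by
    rw [hw2, lap_comb2 smW0 (sm_mul smDiv hφ)]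
  have hlapwC : lap w = fun y => lap (fun z => ∑ i, X i z * pd i φ z) y
      + ((n:ℝ)-4)/(2*(n:ℝ)) * (lap divX y * φ y)
      + (2*(((n:ℝ)-4)/(2*(n:ℝ)))) * (∑ k, pd k divX y * pd k φ y)
      + ((n:ℝ)-4)/(2*(n:ℝ)) * (divX y * lap φ y) := by
    funext y
    rw [congrFun hlapw y]
    beta_reduce
    rw [congrFun (lap_mul smDiv hφ) y]
    beta_reduce
    ring
  have hlap2w : lap (lap w) x
      = lap (lap (fun z => ∑ i, X i z * pd i φ z)) x
        + ((n:ℝ)-4)/(2*(n:ℝ)) * lap (fun y => lap divX y * φ y) x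
        + (2*(((n:ℝ)-4)/(2*(n:ℝ)))) * lap (fun y => ∑ k, pd k divX y * pd k φ y) x
        + ((n:ℝ)-4)/(2*(n:ℝ)) * lap (fun y => divX y * lap φ y) x := by
    rw [hlapwC, lap_comb4' (sm_lap smW0) (sm_mul (sm_lap smDiv) hφ) smG smP4]
  -- assemble
  simp only [hDP]
  rw [hT1, hT2, hterm3, hterm5, hDRvx, hterm6, hlap2w, hlapG, hlapP4, hlapP1]
  field_simp
  ring

end Master

section Bubble
variable {n : ℕ}

noncomputable def tf (ε : ℝ) : EuclideanSpace ℝ (Fin n) → ℝ :=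
  fun x => ε ^ 2 + ∑ j, (x j) ^ 2

noncomputable def qf (ε : ℝ) (a : ℝ) : EuclideanSpace ℝ (Fin n) → ℝ :=
  fun x => tf ε x ^ a

theorem sm_coord (j : Fin n) : Sm (fun x : EuclideanSpace ℝ (Fin n) => x j) :=
  (EuclideanSpace.proj (𝕜 := ℝ) (ι := Fin n) j).contDiff

theorem pd_coord (i j : Fin n) :
    pd i (fun x : EuclideanSpace ℝ (Fin n) => x j) = fun _ => if j = i then (1:ℝ) else 0 := by
  funext x
  show fderiv ℝ (fun x : EuclideanSpace ℝ (Fin n) => x j) x (EuclideanSpace.single i 1)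
    = if j = i then (1:ℝ) else 0
  have hL : HasFDerivAt (fun x : EuclideanSpace ℝ (Fin n) => x j)
      (EuclideanSpace.proj (𝕜 := ℝ) (ι := Fin n) j) x :=
    (EuclideanSpace.proj (𝕜 := ℝ) (ι := Fin n) j).hasFDerivAt
  rw [hL.fderiv]
  show (EuclideanSpace.single i (1:ℝ)) j = _
  rw [EuclideanSpace.single_apply]

theorem sm_tf (ε : ℝ) : Sm (tf (n := n) ε) := by
  have : Sm (fun x : EuclideanSpace ℝ (Fin n) => (ε^2) + ∑ j, (x j)^2) :=
    sm_add contDiff_const (sm_sum _ (fun j => (sm_coord j).pow 2))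
  exact this

theorem tpos {ε : ℝ} (hε : 0 < ε) (x : EuclideanSpace ℝ (Fin n)) : 0 < tf ε x := by
  have h1 : 0 < ε ^ 2 := pow_pos hε 2
  have h2 : (0:ℝ) ≤ ∑ j, (x j) ^ 2 := Finset.sum_nonneg (fun j _ => sq_nonneg _)
  have : tf ε x = ε ^ 2 + ∑ j, (x j) ^ 2 := rfl
  linarith

theorem pd_tf (ε : ℝ) (i : Fin n) : pd i (tf (n := n) ε) = fun x => 2 * x i := by
  have h0 : tf (n := n) ε = fun x => (ε^2) + ∑ j, (x j)^2 := rfl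
  rw [h0, pd_add contDiff_const (sm_sum Finset.univ (fun j => (sm_coord j).pow 2)) i,
    pd_const (ε^2) i, pd_sum Finset.univ (fun j => (sm_coord j).pow 2) i]
  have hsq : ∀ j : Fin n, pd i (fun x : EuclideanSpace ℝ (Fin n) => (x j)^2)
      = fun x => (if j = i then (1:ℝ) else 0) * (2 * x j) := by
    intro j
    have h1 : (fun x : EuclideanSpace ℝ (Fin n) => (x j)^2)
        = fun x => x j * x j := by funext x; ring
    rw [h1, pd_mul (sm_coord j) (sm_coord j) i, pd_coord i j]
    funext x
    beta_reduce
    ring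
  funext x
  beta_reduce
  rw [Finset.sum_congr rfl (fun j (_ : j ∈ Finset.univ) => by rw [hsq j])]
  rw [Finset.sum_eq_single i]
  · simp
  · intro j _ hj
    rw [if_neg hj]
    ring
  · intro h; exact absurd (Finset.mem_univ i) h

theorem sm_q {ε : ℝ} (hε : 0 < ε) (a : ℝ) : Sm (qf (n := n) ε a) := by
  exact contDiff_iff_contDiffAt.mpr (fun x =>
    ContDiffAt.rpow_const_of_ne ((sm_tf ε).contDiffAt) (tpos hε x).ne')

theorem pd_q {ε : ℝ} (hε : 0 < ε) (a : ℝ) (i : Fin n) :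
    pd i (qf (n := n) ε a) = fun x => 2 * a * x i * qf ε (a-1) x := by
  funext x
  have h := (Real.hasDerivAt_rpow_const (x := tf ε x) (p := a)
      (Or.inl (tpos hε x).ne')).comp_hasFDerivAt x
    ((sm_diff (sm_tf ε) x).hasFDerivAt)
  have h' : HasFDerivAt (qf (n := n) ε a)
      ((a * tf ε x ^ (a - 1)) • fderiv ℝ (tf ε) x) x := h
  show fderiv ℝ (qf (n := n) ε a) x (EuclideanSpace.single i 1) = _
  rw [h'.fderiv]
  have h2 : fderiv ℝ (tf ε) x (EuclideanSpace.single i 1) = 2 * x i := by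
    have := congrFun (pd_tf ε i) x
    exact this
  rw [ContinuousLinearMap.smul_apply, h2, smul_eq_mul]
  show a * tf ε x ^ (a-1) * (2 * x i) = 2 * a * x i * (tf ε x ^ (a-1))
  ring

theorem lap_q {ε : ℝ} (hε : 0 < ε) (a : ℝ) :
    lap (qf (n := n) ε a) = fun x =>
      (2*a*(n:ℝ) + 4*a*(a-1)) * qf ε (a-1) x - 4*a*(a-1)*ε^2 * qf ε (a-2) x := by
  funext x
  show (∑ i, pd i (pd i (qf ε a)) x) = _
  have e1 : ∀ i : Fin n, pd i (pd i (qf ε a)) x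
      = 2*a*(qf ε (a-1) x) + 2*a*(2*(a-1)) * ((x i)^2 * qf ε (a-2) x) := by
    intro i
    rw [pd_q hε a i]
    have h1 : (fun y : EuclideanSpace ℝ (Fin n) => 2 * a * y i * qf ε (a-1) y)
        = fun y => (2*a) * (y i * qf ε (a-1) y) := by funext y; ring
    rw [h1, pd_const_mul (sm_mul (sm_coord i) (sm_q hε (a-1))) (2*a) i,
      pd_mul (sm_coord i) (sm_q hε (a-1)) i, pd_coord i i, pd_q hε (a-1) i]
    beta_reduce
    rw [if_pos rfl]
    have : a - 1 - 1 = a - 2 := by ring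
    rw [this]
    ring
  rw [Finset.sum_congr rfl (fun i (_ : i ∈ Finset.univ) => e1 i)]
  rw [Finset.sum_add_distrib, Finset.sum_const, ← Finset.mul_sum,
    Finset.card_univ, Fintype.card_fin, nsmul_eq_mul]
  have hsumsq : (∑ i : Fin n, (x i)^2 * qf ε (a-2) x) = (tf ε x - ε^2) * qf ε (a-2) x := by
    rw [← Finset.sum_mul]
    congr 1
    show (∑ i, (x i)^2) = (ε^2 + ∑ j, (x j)^2) - ε^2
    ring
  rw [hsumsq]
  have hq : tf ε x * qf ε (a-2) x = qf ε (a-1) x := by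
    show tf ε x * tf ε x ^ (a-2) = tf ε x ^ (a-1)
    have h3 : a - 1 = (a-2) + 1 := by ring
    rw [h3, Real.rpow_add_one (tpos hε x).ne']
    ring
  have expand : (tf ε x - ε^2) * qf ε (a-2) x = qf ε (a-1) x - ε^2 * qf ε (a-2) x := by
    rw [sub_mul, hq]
  rw [expand]
  push_cast
  ring

theorem lap_lin2 {f1 f2 : EuclideanSpace ℝ (Fin n) → ℝ}
    (h1 : Sm f1) (h2 : Sm f2) (c1 c2 : ℝ) :
    lap (fun x => c1 * f1 x + c2 * f2 x) = fun x => c1 * lap f1 x + c2 * lap f2 x := by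
  rw [lap_add (sm_const_mul h1 c1) (sm_const_mul h2 c2), lap_const_mul h1 c1,
    lap_const_mul h2 c2]

theorem lap_cq {ε : ℝ} (hε : 0 < ε) (c a : ℝ) :
    lap (fun x : EuclideanSpace ℝ (Fin n) => c * qf ε a x)
      = fun x => (c * (2*a*(n:ℝ) + 4*a*(a-1))) * qf ε (a-1) x
          + (-(c * (4*a*(a-1)*ε^2))) * qf ε (a-2) x := by
  rw [lap_const_mul (sm_q hε a) c, lap_q hε a]
  funext x
  beta_reduce
  ring

theorem lap2_cq {ε : ℝ} (hε : 0 < ε) (c a : ℝ) :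
    lap (lap (fun x : EuclideanSpace ℝ (Fin n) => c * qf ε a x))
      = fun x =>
        ((c * (2*a*(n:ℝ) + 4*a*(a-1))) * (2*(a-1)*(n:ℝ) + 4*(a-1)*(a-1-1))) * qf ε (a-2) x
        + (((c * (2*a*(n:ℝ) + 4*a*(a-1))) * (-(4*(a-1)*(a-1-1)*ε^2)))
            + ((-(c * (4*a*(a-1)*ε^2))) * (2*(a-2)*(n:ℝ) + 4*(a-2)*(a-2-1)))) * qf ε (a-3) x
        + ((-(c * (4*a*(a-1)*ε^2))) * (-(4*(a-2)*(a-2-1)*ε^2))) * qf ε (a-4) x := by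
  rw [lap_cq hε c a, lap_lin2 (sm_q hε (a-1)) (sm_q hε (a-2)), lap_q hε (a-1), lap_q hε (a-2)]
  funext x
  beta_reduce
  rw [show a - 1 - 1 = a - 2 from by ring, show a - 1 - 2 = a - 3 from by ring,
    show a - 2 - 1 = a - 3 from by ring, show a - 2 - 2 = a - 4 from by ring]
  ring

theorem tf_eq (ε : ℝ) (x : EuclideanSpace ℝ (Fin n)) : ε^2 + ‖x‖^2 = tf ε x := by
  show _ = ε^2 + ∑ j, (x j)^2
  congr 1
  rw [EuclideanSpace.norm_eq, Real.sq_sqrt (by positivity)]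
  simp [sq_abs]

theorem u_eq {ε : ℝ} (hε : 0 < ε) :
    (fun x : EuclideanSpace ℝ (Fin n) => (ε / (ε^2 + ‖x‖^2)) ^ (((n:ℝ)-4)/2))
      = fun x => ε ^ (((n:ℝ)-4)/2) * qf ε (-(((n:ℝ)-4)/2)) x := by
  funext x
  rw [tf_eq ε x]
  rw [Real.div_rpow hε.le (tpos hε x).le]
  show _ = ε ^ (((n:ℝ)-4)/2) * tf ε x ^ (-(((n:ℝ)-4)/2))
  rw [Real.rpow_neg (tpos hε x).le, div_eq_mul_inv]

theorem q_mul {ε : ℝ} (hε : 0 < ε) (a b : ℝ) (x : EuclideanSpace ℝ (Fin n)) :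
    qf ε (a + b) x = qf ε a x * qf ε b x := by
  show tf ε x ^ (a+b) = tf ε x ^ a * tf ε x ^ b
  exact Real.rpow_add (tpos hε x) a b

end Bubble


open Tool in
set_option maxHeartbeats 2000000 in
/-- Correction term lemma (Lemma 4.5): with `u_ε` the standard bubble, `X` a smooth vector
field on `ℝⁿ`, `S = 𝓛_X g_e − (2/n)(div X) g_e`, the function
`w = Xᵢ ∂ᵢ u_ε + ((n−4)/(2n)) (div X) u_ε` solves the linearized equation
`Δ² w − ((n+4)/(n−4)) 𝔠(n) u_ε^{8/(n−4)} w = − DP_{g_e}[S] u_ε`. -/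
theorem correction_term_solves_linearized_equation
    (n : ℕ) (hn : 5 ≤ n) (ε : ℝ) (hε : 0 < ε)
    (X : Fin n → EuclideanSpace ℝ (Fin n) → ℝ)
    (hX : ∀ i, ContDiff ℝ (⊤ : ℕ∞) (X i)) :
    let u : EuclideanSpace ℝ (Fin n) → ℝ :=
      fun x => (ε / (ε ^ 2 + ‖x‖ ^ 2)) ^ (((n : ℝ) - 4) / 2)
    let divX : EuclideanSpace ℝ (Fin n) → ℝ := fun x => ∑ i, pd i (X i) x
    -- S = 𝓛_X g_e − (2/n)(div X) g_e in coordinates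
    let S : Fin n → Fin n → EuclideanSpace ℝ (Fin n) → ℝ := fun i j x =>
      pd i (X j) x + pd j (X i) x - (2 / (n : ℝ)) * divX x * (if i = j then 1 else 0)
    let trS : EuclideanSpace ℝ (Fin n) → ℝ := fun x => ∑ i, S i i x
    -- DR[S] = ∂ᵢ∂ⱼ S_{ij} − Δ (tr S)
    let DR : EuclideanSpace ℝ (Fin n) → ℝ := fun x =>
      (∑ i, ∑ j, pd i (pd j (S i j)) x) - lap trS x
    -- D Ric[S]_{ij} = (1/2)(∂ₖ∂ᵢ S_{jk} + ∂ₖ∂ⱼ S_{ik} − Δ S_{ij} − ∂ᵢ∂ⱼ tr S)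
    let DRic : Fin n → Fin n → EuclideanSpace ℝ (Fin n) → ℝ := fun i j x =>
      (1 / 2) * ((∑ k, pd k (pd i (S j k)) x) + (∑ k, pd k (pd j (S i k)) x)
        - lap (S i j) x - pd i (pd j trS) x)
    -- linearized Paneitz operator at the Euclidean metric in direction S
    let DP : (EuclideanSpace ℝ (Fin n) → ℝ) → EuclideanSpace ℝ (Fin n) → ℝ := fun φ x =>
      -(lap (fun y => ∑ i, ∑ j, pd i (fun z => S i j z * pd j φ z) y) x)
      - (∑ i, ∑ j, pd i (fun z => S i j z * pd j (lap φ) z) x)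
      + (4 / ((n : ℝ) - 2)) * ∑ i, ∑ j, DRic i j x * pd i (pd j φ) x
      - ((4 + ((n : ℝ) - 2) ^ 2) / (2 * ((n : ℝ) - 2) * ((n : ℝ) - 1))) * DR x * lap φ x
      - (((n : ℝ) - 6) / (2 * ((n : ℝ) - 1))) * ∑ k, pd k DR x * pd k φ x
      - (((n : ℝ) - 4) / (4 * ((n : ℝ) - 1))) * lap DR x * φ x
    let w : EuclideanSpace ℝ (Fin n) → ℝ := fun x =>
      (∑ i, X i x * pd i u x) + (((n : ℝ) - 4) / (2 * (n : ℝ))) * divX x * u x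
    ∀ x, lap (lap w) x
        - (((n : ℝ) + 4) / ((n : ℝ) - 4)) *
            (((n : ℝ) - 4) * ((n : ℝ) - 2) * (n : ℝ) * ((n : ℝ) + 2)) *
            u x ^ ((8 : ℝ) / ((n : ℝ) - 4)) * w x
      = -(DP u x) := by
  intro u divX S trS DR DRic DP w
  intro x
  have hnR : (5:ℝ) ≤ (n:ℝ) := by exact_mod_cast hn
  have hn0 : (n:ℝ) ≠ 0 := by linarith
  have hn4 : (n:ℝ) - 4 ≠ 0 := by linarith
  have hueq : u = fun y => ε ^ (((n:ℝ)-4)/2) * qf ε (-(((n:ℝ)-4)/2)) y := u_eq hε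
  have hsmu : Tool.Sm u := by rw [hueq]; exact sm_const_mul (sm_q hε _) _
  have hM := master hn X hX u hsmu divX S trS DR DRic DP w
    rfl rfl rfl rfl rfl rfl rfl x
  -- bubble computations
  have hlap2u : lap (lap u)
      = fun y => ((((n:ℝ)-4)*((n:ℝ)-2)*(n:ℝ)*((n:ℝ)+2))
            * (ε ^ (((n:ℝ)-4)/2) * ε^2 * ε^2)) * qf ε (-(((n:ℝ)-4)/2)-4) y := by
    rw [hueq, lap2_cq hε (ε ^ (((n:ℝ)-4)/2)) (-(((n:ℝ)-4)/2))]
    funext y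
    beta_reduce
    ring
  have hpdlap2u : ∀ j, pd j (lap (lap u))
      = fun y => ((((n:ℝ)-4)*((n:ℝ)-2)*(n:ℝ)*((n:ℝ)+2))
            * (ε ^ (((n:ℝ)-4)/2) * ε^2 * ε^2))
          * (2 * (-(((n:ℝ)-4)/2)-4) * y j * qf ε (-(((n:ℝ)-4)/2)-4-1) y) := by
    intro j
    rw [hlap2u, pd_const_mul (sm_q hε _) _ j, pd_q hε _ j]
  have hpdu : ∀ j, pd j u
      = fun y => ε ^ (((n:ℝ)-4)/2)
          * (2 * (-(((n:ℝ)-4)/2)) * y j * qf ε (-(((n:ℝ)-4)/2)-1) y) := by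
    intro j
    rw [hueq, pd_const_mul (sm_q hε _) _ j, pd_q hε _ j]
  have hupow : ∀ y, u y ^ ((8:ℝ)/((n:ℝ)-4)) = (ε^2*ε^2) * qf ε (-4 : ℝ) y := by
    intro y
    have h1 : u y = (ε / tf ε y) ^ (((n:ℝ)-4)/2) := by
      show (ε / (ε ^ 2 + ‖y‖ ^ 2)) ^ (((n : ℝ) - 4) / 2) = _
      rw [tf_eq ε y]
    rw [h1, ← Real.rpow_mul (div_nonneg hε.le (tpos hε y).le)]
    rw [show (((n:ℝ)-4)/2) * ((8:ℝ)/((n:ℝ)-4)) = ((4:ℕ):ℝ) from by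
      push_cast; field_simp; ring]
    rw [Real.rpow_natCast, div_pow]
    have h2 : qf ε (-4 : ℝ) y = (tf ε y ^ (4:ℕ))⁻¹ := by
      show tf ε y ^ (-4 : ℝ) = _
      rw [show (-4:ℝ) = -((4:ℕ):ℝ) from by norm_num, Real.rpow_neg (tpos hε y).le,
        Real.rpow_natCast]
    rw [h2, div_eq_mul_inv]
    ring
  -- the key pointwise identity
  have hkey : (∑ j, X j x * pd j (lap (lap u)) x)
        + (((n:ℝ)+4)/(2*(n:ℝ))) * divX x * lap (lap u) x
      = (((n:ℝ)+4)/((n:ℝ)-4)) * ((((n:ℝ)-4)*((n:ℝ)-2)*(n:ℝ)*((n:ℝ)+2)))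
          * u x ^ ((8:ℝ)/((n:ℝ)-4)) * w x := by
    have hwx : w x = (∑ i, X i x * pd i u x)
        + (((n:ℝ)-4)/(2*(n:ℝ))) * divX x * u x := rfl
    have hL : ∀ j, X j x * pd j (lap (lap u)) x
        = (((((n:ℝ)-4)*((n:ℝ)-2)*(n:ℝ)*((n:ℝ)+2)) * (ε ^ (((n:ℝ)-4)/2) * ε^2 * ε^2))
            * (2 * (-(((n:ℝ)-4)/2)-4) * qf ε ((-4 : ℝ) + (-(((n:ℝ)-4)/2)-1)) x))
          * (X j x * x j) := by
      intro j
      rw [congrFun (hpdlap2u j) x,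
        show (-(((n:ℝ)-4)/2)-4-1 : ℝ) = (-4 : ℝ) + (-(((n:ℝ)-4)/2)-1) from by ring]
      ring
    have hRt : ∀ j, X j x * pd j u x
        = (ε ^ (((n:ℝ)-4)/2) * (2 * (-(((n:ℝ)-4)/2)) * qf ε (-(((n:ℝ)-4)/2)-1) x))
          * (X j x * x j) := by
      intro j
      rw [congrFun (hpdu j) x]
      ring
    rw [hwx, hupow x, congrFun hlap2u x, congrFun hueq x,
      Finset.sum_congr rfl (fun j (_ : j ∈ Finset.univ) => hL j), ← Finset.mul_sum,
      Finset.sum_congr rfl (fun j (_ : j ∈ Finset.univ) => hRt j), ← Finset.mul_sum]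
    beta_reduce
    rw [show (-(((n:ℝ)-4)/2)-4 : ℝ) = (-4 : ℝ) + (-(((n:ℝ)-4)/2)) from by ring]
    rw [q_mul hε (-4 : ℝ) (-(((n:ℝ)-4)/2)-1) x, q_mul hε (-4 : ℝ) (-(((n:ℝ)-4)/2)) x]
    field_simp
    ring
  linarith [hM, hkey]
end

section
/- Let n ≥ 5 and p, q ∈ ℝⁿ, ε_i, ε_j > 0. Then ∫_{ℝⁿ} (ε_i/(ε_i² + |x−p|²))^{(n−4)/2} · (ε_j/(ε_j² + |x−q|²))^{(n+4)/2} dx ≤ C(n) · ((ε_j² + |p−q|²)/(ε_i ε_j))^{−(n−4)/2} for a constant C(n) depending only on n. -/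
open MeasureTheory

open Metric Set
open scoped ENNReal

lemma key_calc (n : ℕ) (hn : 5 ≤ n) (R : ℝ) (hR : 0 < R) (k : ℕ) :
    (((R * (2:ℝ) ^ (-((k:ℝ)+1)))^2) ^ (-(((n:ℝ)-4)/2))) * (R * (2:ℝ) ^ (-(k:ℝ)))^n
      ≤ R^4 * 2^((n:ℝ)-4) * (1/2)^k := by
  set a : ℝ := (n:ℝ) - 4 with ha
  have h2 : (0:ℝ) < 2 := by norm_num
  have hrk : (0:ℝ) < R * (2:ℝ) ^ (-(k:ℝ)) := by positivity
  have hrk1 : (0:ℝ) < R * (2:ℝ) ^ (-((k:ℝ)+1)) := by positivity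
  have e1 : (((R * (2:ℝ) ^ (-((k:ℝ)+1)))^2) ^ (-(a/2))) = (R * (2:ℝ) ^ (-((k:ℝ)+1))) ^ (-a) := by
    rw [← Real.rpow_natCast (R * (2:ℝ) ^ (-((k:ℝ)+1))) 2, ← Real.rpow_mul hrk1.le]
    norm_num
    rw [show -(2 * (a/2)) = -a by ring]
  rw [e1, ← Real.rpow_natCast (R * (2:ℝ) ^ (-(k:ℝ))) n, Real.mul_rpow hR.le (by positivity),
    Real.mul_rpow hR.le (by positivity), ← Real.rpow_mul h2.le, ← Real.rpow_mul h2.le]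
  have e2 : R ^ (-a) * (2:ℝ) ^ (-((k:ℝ)+1) * -a) * (R ^ (n:ℝ) * (2:ℝ) ^ (-(k:ℝ) * (n:ℝ)))
      = R ^ (4:ℝ) * (2:ℝ) ^ (a - 4*k) := by
    rw [show R ^ (-a) * (2:ℝ) ^ (-((k:ℝ)+1) * -a) * (R ^ (n:ℝ) * (2:ℝ) ^ (-(k:ℝ) * (n:ℝ)))
        = (R ^ (-a) * R ^ (n:ℝ)) * ((2:ℝ) ^ (-((k:ℝ)+1) * -a) * (2:ℝ) ^ (-(k:ℝ) * (n:ℝ))) by ring,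
      ← Real.rpow_add hR, ← Real.rpow_add h2]
    congr 1
    · congr 1; rw [ha]; ring
    · congr 1; rw [ha]; ring
  rw [e2]
  have e3 : R ^ (4:ℝ) = R ^ 4 := by
    rw [show (4:ℝ) = ((4:ℕ):ℝ) by norm_num, Real.rpow_natCast]
  rw [e3, mul_assoc]
  have h4 : (0:ℝ) ≤ R^4 := by positivity
  refine mul_le_mul_of_nonneg_left ?_ h4
  rw [show a - 4*(k:ℝ) = a + (-(4*(k:ℝ))) by ring, Real.rpow_add h2]
  have h5 : (0:ℝ) ≤ (2:ℝ) ^ a := by positivity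
  refine mul_le_mul_of_nonneg_left ?_ h5
  have : (2:ℝ) ^ (-(4*(k:ℝ))) ≤ (2:ℝ) ^ (-(k:ℝ)) :=
    Real.rpow_le_rpow_of_exponent_le (by norm_num) (by nlinarith [Nat.cast_nonneg (α := ℝ) k])
  refine this.trans_eq ?_
  rw [Real.rpow_neg h2.le, Real.rpow_natCast, one_div, inv_pow]

lemma lint_ball (n : ℕ) (hn : 5 ≤ n) (p : EuclideanSpace ℝ (Fin n)) (R : ℝ) (hR : 0 < R) :
    ∫⁻ x in ball p R, ENNReal.ofReal ((‖x - p‖^2) ^ (-(((n:ℝ)-4)/2))) ≤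
      ENNReal.ofReal (R^4 * 2^((n:ℝ)-4)) * volume (ball (0:EuclideanSpace ℝ (Fin n)) 1) * 2 := by
  haveI : Nonempty (Fin n) := ⟨⟨0, by omega⟩⟩
  haveI : Nontrivial (EuclideanSpace ℝ (Fin n)) := inferInstance
  have ha0 : (0:ℝ) ≤ (n:ℝ) - 4 := by
    have : (5:ℝ) ≤ (n:ℝ) := by exact_mod_cast hn
    linarith
  set r : ℕ → ℝ := fun k => R * (2:ℝ) ^ (-(k:ℝ)) with hrdef
  have hrpos : ∀ k, 0 < r k := fun k => by simp only [hrdef]; positivity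
  have hreq : ∀ k : ℕ, r k = R * (1/2:ℝ)^k := by
    intro k
    simp only [hrdef]
    rw [Real.rpow_neg (by norm_num), Real.rpow_natCast, one_div, inv_pow]
  set A : ℕ → Set (EuclideanSpace ℝ (Fin n)) := fun k => ball p (r k) \ ball p (r (k+1)) with hAdef
  have hsub : ball p R ⊆ (⋃ k, A k) ∪ {p} := by
    intro x hx
    rcases eq_or_ne x p with h | h
    · exact Or.inr (by simp [h])
    · left
      have hx0 : 0 < ‖x - p‖ := by
        rw [norm_pos_iff, sub_ne_zero]; exact h
      have hxR : ‖x - p‖ < R := by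
        rw [mem_ball, dist_eq_norm] at hx; exact hx
      have hex : ∃ k : ℕ, r (k+1) ≤ ‖x - p‖ := by
        obtain ⟨j, hj⟩ := exists_pow_lt_of_lt_one (div_pos hx0 hR) (by norm_num : (1/2:ℝ) < 1)
        refine ⟨j, ?_⟩
        have h1 : R * (1/2:ℝ)^(j+1) ≤ R * (1/2:ℝ)^j := by
          have : ((1:ℝ)/2)^(j+1) ≤ (1/2:ℝ)^j :=
            pow_le_pow_of_le_one (by norm_num) (by norm_num) (Nat.le_succ j)
          exact mul_le_mul_of_nonneg_left this hR.le
        have h2 : R * (1/2:ℝ)^j ≤ ‖x - p‖ := by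
          have := (lt_div_iff₀ hR).mp hj
          rw [mul_comm] at this
          exact this.le
        rw [hreq]
        exact h1.trans h2
      set k0 := Nat.find hex with hk0
      have hspec : r (k0+1) ≤ ‖x - p‖ := Nat.find_spec hex
      have hlt : ‖x - p‖ < r k0 := by
        by_cases hk : k0 = 0
        · rw [hk]
          simpa [hrdef] using hxR
        · have hlt' : k0 - 1 < k0 := Nat.pred_lt hk
          have hmin := Nat.find_min hex hlt'
          push_neg at hmin
          have e : k0 - 1 + 1 = k0 := by omega
          rwa [e] at hmin
      refine mem_iUnion.2 ⟨k0, ?_, ?_⟩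
      · rw [mem_ball, dist_eq_norm]; exact hlt
      · rw [mem_ball, dist_eq_norm]; push_neg; exact hspec
  calc ∫⁻ x in ball p R, ENNReal.ofReal ((‖x - p‖^2) ^ (-(((n:ℝ)-4)/2)))
      ≤ ∫⁻ x in (⋃ k, A k) ∪ {p}, ENNReal.ofReal ((‖x - p‖^2) ^ (-(((n:ℝ)-4)/2))) :=
        lintegral_mono_set hsub
    _ ≤ (∫⁻ x in (⋃ k, A k), ENNReal.ofReal ((‖x - p‖^2) ^ (-(((n:ℝ)-4)/2)))) +
        ∫⁻ x in ({p} : Set _), ENNReal.ofReal ((‖x - p‖^2) ^ (-(((n:ℝ)-4)/2))) :=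
        lintegral_union_le _ _ _
    _ ≤ (∑' k, ∫⁻ x in A k, ENNReal.ofReal ((‖x - p‖^2) ^ (-(((n:ℝ)-4)/2)))) + 0 := by
        gcongr
        · exact lintegral_iUnion_le _ _
        · rw [setLIntegral_measure_zero]
          exact measure_singleton p
    _ ≤ (∑' k : ℕ, (ENNReal.ofReal (R^4 * 2^((n:ℝ)-4)) *
          volume (ball (0:EuclideanSpace ℝ (Fin n)) 1)) * ENNReal.ofReal ((1/2:ℝ)^k)) + 0 := by
        gcongr with k
        calc ∫⁻ x in A k, ENNReal.ofReal ((‖x - p‖^2) ^ (-(((n:ℝ)-4)/2)))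
            ≤ ∫⁻ _x in A k, ENNReal.ofReal (((r (k+1))^2) ^ (-(((n:ℝ)-4)/2))) := by
              refine setLIntegral_mono measurable_const (fun x hx => ?_)
              refine ENNReal.ofReal_le_ofReal ?_
              have hge : r (k+1) ≤ ‖x - p‖ := by
                have := hx.2
                rw [mem_ball, dist_eq_norm] at this
                push_neg at this
                exact this
              have hsq : (r (k+1))^2 ≤ ‖x - p‖^2 := by
                have := hrpos (k+1)
                nlinarith
              exact Real.rpow_le_rpow_of_nonpos (by positivity) hsq (by linarith [ha0] : -(((n:ℝ)-4)/2) ≤ 0)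
          _ = ENNReal.ofReal (((r (k+1))^2) ^ (-(((n:ℝ)-4)/2))) * volume (A k) :=
              setLIntegral_const _ _
          _ ≤ ENNReal.ofReal (((r (k+1))^2) ^ (-(((n:ℝ)-4)/2))) * volume (ball p (r k)) := by
              exact mul_le_mul_right (measure_mono diff_subset) _
          _ = ENNReal.ofReal (((r (k+1))^2) ^ (-(((n:ℝ)-4)/2))) *
                (ENNReal.ofReal ((r k)^n) * volume (ball (0:EuclideanSpace ℝ (Fin n)) 1)) := by
              rw [Measure.addHaar_ball volume p (hrpos k).le]
              simp [finrank_euclideanSpace_fin]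
          _ = ENNReal.ofReal ((((r (k+1))^2) ^ (-(((n:ℝ)-4)/2))) * (r k)^n) *
                volume (ball (0:EuclideanSpace ℝ (Fin n)) 1) := by
              rw [ENNReal.ofReal_mul (by positivity), mul_assoc]
          _ ≤ ENNReal.ofReal (R^4 * 2^((n:ℝ)-4) * (1/2:ℝ)^k) *
                volume (ball (0:EuclideanSpace ℝ (Fin n)) 1) := by
              refine mul_le_mul_left (ENNReal.ofReal_le_ofReal ?_) _
              have e : r (k+1) = R * (2:ℝ)^(-((k:ℝ)+1)) := by
                simp only [hrdef]
                push_cast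
                ring_nf
              rw [e]
              exact key_calc n hn R hR k
          _ = (ENNReal.ofReal (R^4 * 2^((n:ℝ)-4)) *
                volume (ball (0:EuclideanSpace ℝ (Fin n)) 1)) * ENNReal.ofReal ((1/2:ℝ)^k) := by
              rw [ENNReal.ofReal_mul (by positivity)]
              ring
    _ ≤ ENNReal.ofReal (R^4 * 2^((n:ℝ)-4)) * volume (ball (0:EuclideanSpace ℝ (Fin n)) 1) * 2 := by
        rw [add_zero, ENNReal.tsum_mul_left]
        gcongr
        have : ∀ k : ℕ, ENNReal.ofReal ((1/2:ℝ)^k) = (2⁻¹ : ENNReal)^k := by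
          intro k
          rw [ENNReal.ofReal_pow (by norm_num)]
          congr 1
          rw [one_div, ENNReal.ofReal_inv_of_pos (by norm_num)]
          norm_num
        simp_rw [this]
        rw [ENNReal.tsum_geometric, ENNReal.one_sub_inv_two, inv_inv]


lemma g_int (n : ℕ) (hn : 5 ≤ n) (q : EuclideanSpace ℝ (Fin n)) (ε : ℝ) (hε : 0 < ε) :
    Integrable (fun x : EuclideanSpace ℝ (Fin n) => (ε / (ε^2 + ‖x - q‖^2)) ^ (((n:ℝ)+4)/2)) ∧
    ∫ x : EuclideanSpace ℝ (Fin n), (ε / (ε^2 + ‖x - q‖^2)) ^ (((n:ℝ)+4)/2)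
      = ε ^ (((n:ℝ)-4)/2) *
        ∫ y : EuclideanSpace ℝ (Fin n), ((1:ℝ) + ‖y‖^2) ^ (-((n:ℝ)+4)/2) := by
  have hs : (0:ℝ) < ((n:ℝ)+4)/2 := by positivity
  set s : ℝ := ((n:ℝ)+4)/2 with hsdef
  set φ : EuclideanSpace ℝ (Fin n) → ℝ := fun y => (ε / (ε^2 + ‖y‖^2)) ^ s with hφ
  have hden : ∀ y : EuclideanSpace ℝ (Fin n), (0:ℝ) < ε^2 + ‖y‖^2 := by
    intro y; positivity
  have hφcont : Continuous φ := by
    apply Continuous.rpow_const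
    · exact continuous_const.div (by fun_prop) (fun y => (hden y).ne')
    · exact fun y => Or.inr hs.le
  have hjap : Integrable (fun y : EuclideanSpace ℝ (Fin n) =>
      ((1:ℝ) + ‖y‖^2) ^ (-((n:ℝ)+4)/2)) := by
    apply integrable_rpow_neg_one_add_norm_sq
    simp [finrank_euclideanSpace_fin]
  have hexp : -((n:ℝ)+4)/2 = -s := by rw [hsdef]; ring
  have hφint : Integrable φ := by
    set δ : ℝ := min (ε^2) 1 with hδdef
    have hδ : 0 < δ := by positivity
    refine (hjap.const_mul ((ε/δ)^s)).mono' hφcont.aestronglyMeasurable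
      (Filter.Eventually.of_forall fun y => ?_)
    have hd : δ * (1 + ‖y‖^2) ≤ ε^2 + ‖y‖^2 := by
      have h2 : δ ≤ ε^2 := min_le_left _ _
      have h3 : δ ≤ 1 := min_le_right _ _
      nlinarith [sq_nonneg (‖y‖)]
    have h1 : ε / (ε^2 + ‖y‖^2) ≤ (ε/δ) * ((1:ℝ)+‖y‖^2)⁻¹ := by
      rw [← div_eq_mul_inv, div_div]
      exact div_le_div_of_nonneg_left hε.le (by positivity) hd
    have h2 : φ y ≤ (ε/δ)^s * ((1:ℝ) + ‖y‖^2) ^ (-((n:ℝ)+4)/2) := by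
      rw [hexp]
      calc φ y ≤ ((ε/δ) * ((1:ℝ)+‖y‖^2)⁻¹) ^ s :=
            Real.rpow_le_rpow (by positivity) h1 hs.le
        _ = (ε/δ)^s * ((1:ℝ) + ‖y‖^2) ^ (-s) := by
            rw [Real.mul_rpow (by positivity) (by positivity),
              Real.inv_rpow (by positivity), ← Real.rpow_neg (by positivity)]
    calc ‖φ y‖ = φ y := by
          rw [Real.norm_eq_abs, abs_of_nonneg (Real.rpow_nonneg (by positivity) _)]
      _ ≤ (ε/δ)^s * ((1:ℝ) + ‖y‖^2) ^ (-((n:ℝ)+4)/2) := h2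
  constructor
  · exact hφint.comp_sub_right q
  · have h1 : (∫ x : EuclideanSpace ℝ (Fin n), (ε / (ε^2 + ‖x - q‖^2)) ^ s)
        = ∫ y, φ y := integral_sub_right_eq_self φ q
    rw [h1]
    have h2 := MeasureTheory.Measure.integral_comp_smul (volume : Measure (EuclideanSpace ℝ (Fin n))) φ ε
    rw [finrank_euclideanSpace_fin] at h2
    have h3 : ∀ y : EuclideanSpace ℝ (Fin n), φ (ε • y) = ε^(-s) * ((1:ℝ)+‖y‖^2)^(-s) := by
      intro y
      have hns : ‖ε • y‖^2 = ε^2 * ‖y‖^2 := by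
        rw [norm_smul, Real.norm_eq_abs, mul_pow, sq_abs]
      simp only [hφ, hns]
      rw [show ε / (ε^2 + ε^2 * ‖y‖^2) = ε⁻¹ * ((1:ℝ)+‖y‖^2)⁻¹ by
        rw [← mul_inv, div_eq_iff (by positivity), inv_mul_eq_div,
          eq_div_iff (by positivity)]
        ring]
      rw [Real.mul_rpow (by positivity) (by positivity),
        Real.inv_rpow hε.le, Real.inv_rpow (by positivity),
        ← Real.rpow_neg hε.le, ← Real.rpow_neg (by positivity)]
    calc (∫ y, φ y) = ε^n * ∫ y, φ (ε • y) := by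
          rw [h2, smul_eq_mul, ← mul_assoc, abs_of_pos (by positivity),
            mul_inv_cancel₀ (by positivity), one_mul]
      _ = ε^n * (ε^(-s) * ∫ y : EuclideanSpace ℝ (Fin n), ((1:ℝ)+‖y‖^2)^(-s)) := by
          congr 1
          simp_rw [h3]
          rw [integral_const_mul]
      _ = ε ^ (((n:ℝ)-4)/2) *
            ∫ y : EuclideanSpace ℝ (Fin n), ((1:ℝ)+‖y‖^2)^(-((n:ℝ)+4)/2) := by
          rw [hexp, ← Real.rpow_natCast ε n, ← mul_assoc, ← Real.rpow_add hε,
            show (n:ℝ) + -s = ((n:ℝ)-4)/2 by rw [hsdef]; ring]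




set_option maxHeartbeats 2000000 in
/-- Bubble interaction estimate (Euclidean model of Lemma 5.9): for `n ≥ 5` there is a
constant `C(n)` such that for all `p, q ∈ ℝⁿ` and `ε_i, ε_j > 0`,
`∫ (ε_i/(ε_i²+|x−p|²))^((n−4)/2) (ε_j/(ε_j²+|x−q|²))^((n+4)/2) dx
  ≤ C(n) ((ε_j²+|p−q|²)/(ε_i ε_j))^(−(n−4)/2)`. -/
theorem bubble_interaction_estimate (n : ℕ) (hn : 5 ≤ n) :
    ∃ C > (0 : ℝ), ∀ (p q : EuclideanSpace ℝ (Fin n)) (εi εj : ℝ),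
      0 < εi → 0 < εj →
      (∫ x : EuclideanSpace ℝ (Fin n),
          (εi / (εi ^ 2 + ‖x - p‖ ^ 2)) ^ (((n : ℝ) - 4) / 2) *
          (εj / (εj ^ 2 + ‖x - q‖ ^ 2)) ^ (((n : ℝ) + 4) / 2))
        ≤ C * ((εj ^ 2 + ‖p - q‖ ^ 2) / (εi * εj)) ^ (-(((n : ℝ) - 4) / 2)) := by
  haveI : Nonempty (Fin n) := ⟨⟨0, by omega⟩⟩
  haveI : Nontrivial (EuclideanSpace ℝ (Fin n)) := inferInstance
  have hn5 : (5:ℝ) ≤ (n:ℝ) := by exact_mod_cast hn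
  set m : ℝ := ((n:ℝ)-4)/2 with hmdef
  set s : ℝ := ((n:ℝ)+4)/2 with hsdef
  have hm : 0 < m := by rw [hmdef]; linarith
  have hs : 0 < s := by rw [hsdef]; linarith
  set c₁ : ℝ := ∫ y : EuclideanSpace ℝ (Fin n), ((1:ℝ) + ‖y‖^2) ^ (-((n:ℝ)+4)/2) with hc₁def
  have hc₁ : 0 ≤ c₁ := integral_nonneg (fun y => Real.rpow_nonneg (by positivity) _)
  set V : ℝ := (volume (ball (0:EuclideanSpace ℝ (Fin n)) 1)).toReal with hVdef
  have hV : 0 ≤ V := ENNReal.toReal_nonneg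
  set C : ℝ := (4:ℝ)^m * c₁ + (25:ℝ)^s * 2^((n:ℝ)-4) * V * 2/16 + 1 with hCdef
  have hCoef1 : (0:ℝ) ≤ (4:ℝ)^m * c₁ := mul_nonneg (Real.rpow_nonneg (by norm_num) _) hc₁
  have hCoef2 : (0:ℝ) ≤ (25:ℝ)^s * 2^((n:ℝ)-4) * V * 2/16 := by
    have h1 : (0:ℝ) ≤ (25:ℝ)^s := Real.rpow_nonneg (by norm_num) _
    have h2 : (0:ℝ) ≤ (2:ℝ)^((n:ℝ)-4) := Real.rpow_nonneg (by norm_num) _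
    have := mul_nonneg (mul_nonneg (mul_nonneg h1 h2) hV) (by norm_num : (0:ℝ) ≤ 2)
    linarith
  have hC : 0 < C := by rw [hCdef]; linarith
  refine ⟨C, hC, fun p q εi εj hεi hεj => ?_⟩
  set D : ℝ := εj^2 + ‖p - q‖^2 with hDdef
  have hD : 0 < D := by rw [hDdef]; positivity
  set ρ : ℝ := Real.sqrt D / 2 with hρdef
  have hρ : 0 < ρ := by rw [hρdef]; positivity
  have hρ2 : ρ^2 = D/4 := by
    rw [hρdef, div_pow, Real.sq_sqrt hD.le]; norm_num
  set F : EuclideanSpace ℝ (Fin n) → ℝ := fun x =>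
    (εi / (εi ^ 2 + ‖x - p‖ ^ 2)) ^ m * (εj / (εj ^ 2 + ‖x - q‖ ^ 2)) ^ s with hFdef
  set g : EuclideanSpace ℝ (Fin n) → ℝ := fun x => (εj / (εj ^ 2 + ‖x - q‖ ^ 2)) ^ s with hgdef
  have hdenp : ∀ x : EuclideanSpace ℝ (Fin n), (0:ℝ) < εi^2 + ‖x - p‖^2 := fun x => by positivity
  have hdenq : ∀ x : EuclideanSpace ℝ (Fin n), (0:ℝ) < εj^2 + ‖x - q‖^2 := fun x => by positivity
  have hgcont : Continuous g := by
    apply Continuous.rpow_const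
    · exact continuous_const.div (by fun_prop) (fun x => (hdenq x).ne')
    · exact fun x => Or.inr hs.le
  have hFcont : Continuous F := by
    apply Continuous.mul _ hgcont
    apply Continuous.rpow_const
    · exact continuous_const.div (by fun_prop) (fun x => (hdenp x).ne')
    · exact fun x => Or.inr hm.le
  have hF0 : ∀ x, 0 ≤ F x := fun x =>
    mul_nonneg (Real.rpow_nonneg (by positivity) _) (Real.rpow_nonneg (by positivity) _)
  have hg0 : ∀ x, 0 ≤ g x := fun x => Real.rpow_nonneg (by positivity) _
  -- geometry: on the ball, the j-denominator is comparable to D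
  have hgeo : ∀ x ∈ ball p ρ, D/25 ≤ εj^2 + ‖x - q‖^2 := by
    intro x hx
    have hxp : ‖x - p‖ < ρ := by rwa [mem_ball, dist_eq_norm] at hx
    by_cases hcase : D ≤ 2*εj^2
    · have := sq_nonneg ‖x - q‖
      nlinarith
    · push_neg at hcase
      have hpq2 : (49/100)*D ≤ ‖p - q‖^2 := by rw [hDdef] at *; nlinarith
      have h1 : (7/10)*Real.sqrt D ≤ ‖p - q‖ := by
        have h2 := Real.sqrt_le_sqrt hpq2
        rwa [Real.sqrt_sq (norm_nonneg _),
          show (49/100:ℝ)*D = ((7/10:ℝ)*Real.sqrt D)^2 by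
            rw [mul_pow, Real.sq_sqrt hD.le]; norm_num,
          Real.sqrt_sq (by positivity)] at h2
      have tri : ‖p - q‖ ≤ ‖p - x‖ + ‖x - q‖ := by
        calc ‖p - q‖ = ‖(p - x) + (x - q)‖ := by rw [sub_add_sub_cancel]
          _ ≤ ‖p - x‖ + ‖x - q‖ := norm_add_le _ _
      have hpx : ‖p - x‖ = ‖x - p‖ := norm_sub_rev p x
      have hρval : ρ = Real.sqrt D / 2 := hρdef
      have hxq : (1/5)*Real.sqrt D ≤ ‖x - q‖ := by
        rw [hpx] at tri
        rw [hρval] at hxp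
        linarith
      have hsq : ((1/5)*Real.sqrt D)^2 ≤ ‖x - q‖^2 :=
        pow_le_pow_left₀ (by positivity) hxq 2
      rw [mul_pow, Real.sq_sqrt hD.le] at hsq
      norm_num at hsq
      have := sq_nonneg εj
      linarith
  -- pointwise bounds
  have hfpt : ∀ x : EuclideanSpace ℝ (Fin n), x ≠ p →
      (εi / (εi ^ 2 + ‖x - p‖ ^ 2)) ^ m ≤ εi^m * (‖x - p‖^2) ^ (-m) := by
    intro x hx
    have hxp0 : x - p ≠ 0 := sub_ne_zero.2 hx
    have ht : (0:ℝ) < ‖x - p‖^2 := pow_pos (norm_pos_iff.mpr hxp0) 2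
    have h1 : εi / (εi ^ 2 + ‖x - p‖ ^ 2) ≤ εi / ‖x - p‖^2 :=
      div_le_div_of_nonneg_left hεi.le ht (by linarith [sq_nonneg εi])
    calc (εi / (εi ^ 2 + ‖x - p‖ ^ 2)) ^ m ≤ (εi / ‖x - p‖^2) ^ m :=
          Real.rpow_le_rpow (by positivity) h1 hm.le
      _ = εi^m * (‖x - p‖^2) ^ (-m) := by
          rw [Real.div_rpow hεi.le ht.le, Real.rpow_neg ht.le, div_eq_mul_inv]
  have hgpt : ∀ x ∈ ball p ρ, g x ≤ εj^s * 25^s * D^(-s) := by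
    intro x hx
    have h0 : (0:ℝ) < D/25 := by positivity
    have h1 : εj / (εj ^ 2 + ‖x - q‖ ^ 2) ≤ εj / (D/25) :=
      div_le_div_of_nonneg_left hεj.le h0 (hgeo x hx)
    calc g x ≤ (εj / (D/25)) ^ s := Real.rpow_le_rpow (by positivity) h1 hs.le
      _ = εj^s * 25^s * D^(-s) := by
          rw [div_div_eq_mul_div, Real.div_rpow (by positivity) hD.le,
            Real.mul_rpow hεj.le (by norm_num), Real.rpow_neg hD.le, div_eq_mul_inv]
  have hfarpt : ∀ x ∉ ball p ρ,
      (εi / (εi ^ 2 + ‖x - p‖ ^ 2)) ^ m ≤ εi^m * (ρ^2) ^ (-m) := by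
    intro x hx
    have hd : ρ ≤ ‖x - p‖ := by
      rw [mem_ball, dist_eq_norm, not_lt] at hx; exact hx
    have h1 : εi / (εi ^ 2 + ‖x - p‖ ^ 2) ≤ εi / ρ^2 := by
      refine div_le_div_of_nonneg_left hεi.le (pow_pos hρ 2) ?_
      have := pow_le_pow_left₀ hρ.le hd 2
      linarith [sq_nonneg εi]
    calc (εi / (εi ^ 2 + ‖x - p‖ ^ 2)) ^ m ≤ (εi / ρ^2) ^ m :=
          Real.rpow_le_rpow (by positivity) h1 hm.le
      _ = εi^m * (ρ^2) ^ (-m) := by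
          rw [Real.div_rpow hεi.le (sq_nonneg ρ), Real.rpow_neg (sq_nonneg ρ),
            div_eq_mul_inv]
  set K1 : ℝ := εi^m * (εj^s * 25^s * D^(-s)) with hK1def
  have hK1 : 0 ≤ K1 := by
    rw [hK1def]
    exact mul_nonneg (Real.rpow_nonneg hεi.le _)
      (mul_nonneg (mul_nonneg (Real.rpow_nonneg hεj.le _)
        (Real.rpow_nonneg (by norm_num) _)) (Real.rpow_nonneg hD.le _))
  set K2 : ℝ := εi^m * (ρ^2)^(-m) with hK2def
  have hK2 : 0 ≤ K2 := by
    rw [hK2def]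
    exact mul_nonneg (Real.rpow_nonneg hεi.le _) (Real.rpow_nonneg (sq_nonneg ρ) _)
  have hae : ∀ᵐ (x : EuclideanSpace ℝ (Fin n)), x ≠ p := by
    refine ae_iff.2 ?_
    have he : {x : EuclideanSpace ℝ (Fin n) | ¬ x ≠ p} = {p} := by ext x; simp
    rw [he]
    exact measure_singleton p
  set Nval : ℝ := K1 * (ρ^4 * 2^((n:ℝ)-4) * V * 2) with hNvaldef
  set Mval : ℝ := K2 * (εj^m * c₁) with hMvaldef
  have hNval : 0 ≤ Nval := by
    rw [hNvaldef]
    refine mul_nonneg hK1 ?_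
    have h2 : (0:ℝ) ≤ (2:ℝ)^((n:ℝ)-4) := Real.rpow_nonneg (by norm_num) _
    have := mul_nonneg (mul_nonneg (mul_nonneg (pow_nonneg hρ.le 4) h2) hV)
      (by norm_num : (0:ℝ) ≤ 2)
    linarith
  have hMval : 0 ≤ Mval := by
    rw [hMvaldef]
    exact mul_nonneg hK2 (mul_nonneg (Real.rpow_nonneg hεj.le _) hc₁)
  -- near part
  have hnear : ∫⁻ x in ball p ρ, ENNReal.ofReal (F x) ≤ ENNReal.ofReal Nval := by
    have step1 : ∫⁻ x in ball p ρ, ENNReal.ofReal (F x) ≤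
        ∫⁻ x in ball p ρ, ENNReal.ofReal (K1 * ((‖x - p‖^2) ^ (-m))) := by
      refine lintegral_mono_ae ?_
      filter_upwards [ae_restrict_of_ae hae, ae_restrict_mem measurableSet_ball]
        with x hxp hxb
      refine ENNReal.ofReal_le_ofReal ?_
      have h1 := hfpt x hxp
      have h2 := hgpt x hxb
      calc F x ≤ (εi^m * (‖x - p‖^2) ^ (-m)) * (εj^s * 25^s * D^(-s)) := by
            simp only [hFdef]
            refine mul_le_mul h1 h2 (hg0 x) ?_
            exact mul_nonneg (Real.rpow_nonneg hεi.le _)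
              (Real.rpow_nonneg (by positivity) _)
        _ = K1 * ((‖x - p‖^2) ^ (-m)) := by rw [hK1def]; ring
    refine step1.trans ?_
    have step2 : ∫⁻ x in ball p ρ, ENNReal.ofReal (K1 * ((‖x - p‖^2) ^ (-m))) =
        ENNReal.ofReal K1 * ∫⁻ x in ball p ρ, ENNReal.ofReal ((‖x - p‖^2) ^ (-m)) := by
      simp_rw [ENNReal.ofReal_mul hK1]
      exact lintegral_const_mul' _ _ ENNReal.ofReal_ne_top
    rw [step2]
    have hvb : volume (ball (0:EuclideanSpace ℝ (Fin n)) 1) = ENNReal.ofReal V :=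
      (ENNReal.ofReal_toReal (measure_ball_lt_top).ne).symm
    calc ENNReal.ofReal K1 * ∫⁻ x in ball p ρ, ENNReal.ofReal ((‖x - p‖^2) ^ (-m))
        ≤ ENNReal.ofReal K1 * (ENNReal.ofReal (ρ^4 * 2^((n:ℝ)-4)) *
            volume (ball (0:EuclideanSpace ℝ (Fin n)) 1) * 2) := by
          refine mul_le_mul_right ?_ _
          have hlb := lint_ball n hn p ρ hρ
          rw [hmdef]
          exact hlb
      _ = ENNReal.ofReal Nval := by
          rw [hvb, show (2:ℝ≥0∞) = ENNReal.ofReal (2:ℝ) by norm_num,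
            ← ENNReal.ofReal_mul (mul_nonneg (pow_nonneg hρ.le 4)
              (Real.rpow_nonneg (by norm_num) _)),
            ← ENNReal.ofReal_mul (mul_nonneg (mul_nonneg (pow_nonneg hρ.le 4)
              (Real.rpow_nonneg (by norm_num) _)) hV),
            ← ENNReal.ofReal_mul hK1, hNvaldef]
  -- far part
  have hgint := g_int n hn q εj hεj
  have hfar : ∫⁻ x in (ball p ρ)ᶜ, ENNReal.ofReal (F x) ≤ ENNReal.ofReal Mval := by
    have step1 : ∫⁻ x in (ball p ρ)ᶜ, ENNReal.ofReal (F x) ≤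
        ∫⁻ x in (ball p ρ)ᶜ, ENNReal.ofReal (K2 * g x) := by
      refine setLIntegral_mono ?_ ?_
      · exact ENNReal.measurable_ofReal.comp ((hgcont.measurable).const_mul K2)
      · intro x hx
        refine ENNReal.ofReal_le_ofReal ?_
        simp only [hFdef]
        rw [hK2def]
        exact mul_le_mul_of_nonneg_right (hfarpt x hx) (hg0 x)
    refine step1.trans ?_
    have step2 : ∫⁻ x in (ball p ρ)ᶜ, ENNReal.ofReal (K2 * g x) ≤
        ∫⁻ x, ENNReal.ofReal (K2 * g x) :=
      lintegral_mono' Measure.restrict_le_self le_rfl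
    refine step2.trans ?_
    calc ∫⁻ x, ENNReal.ofReal (K2 * g x)
        = ENNReal.ofReal K2 * ∫⁻ x, ENNReal.ofReal (g x) := by
          simp_rw [ENNReal.ofReal_mul hK2]
          exact lintegral_const_mul' _ _ ENNReal.ofReal_ne_top
      _ = ENNReal.ofReal K2 * ENNReal.ofReal (∫ x, g x) := by
          rw [ofReal_integral_eq_lintegral_ofReal hgint.1
            (Filter.Eventually.of_forall hg0)]
      _ = ENNReal.ofReal Mval := by
          rw [← ENNReal.ofReal_mul hK2, hMvaldef]
          congr 2
          have h2 := hgint.2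
          simp only [hgdef]
          rw [h2, ← hc₁def, ← hmdef]
      _ ≤ ENNReal.ofReal Mval := le_rfl
  -- combine
  have htotal : ∫⁻ x, ENNReal.ofReal (F x) ≤ ENNReal.ofReal (Nval + Mval) := by
    rw [← lintegral_add_compl (fun x => ENNReal.ofReal (F x))
      (measurableSet_ball (x := p) (ε := ρ)), ENNReal.ofReal_add hNval hMval]
    exact add_le_add hnear hfar
  have hint : (∫ x, F x) = (∫⁻ x, ENNReal.ofReal (F x)).toReal :=
    integral_eq_lintegral_of_nonneg_ae (Filter.Eventually.of_forall hF0)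
      hFcont.aestronglyMeasurable
  calc (∫ x, F x) ≤ Nval + Mval := by
        rw [hint]
        have h1 := ENNReal.toReal_mono ENNReal.ofReal_ne_top htotal
        rwa [ENNReal.toReal_ofReal (by linarith)] at h1
    _ ≤ C * ((εj ^ 2 + ‖p - q‖ ^ 2) / (εi * εj)) ^ (-m) := by
        have hX : ((εj ^ 2 + ‖p - q‖ ^ 2) / (εi * εj)) ^ (-m)
            = εi^m * (εj^m * D^(-m)) := by
          rw [← hDdef, Real.rpow_neg (by positivity), Real.div_rpow hD.le (by positivity),
            inv_div, Real.mul_rpow hεi.le hεj.le, Real.rpow_neg hD.le, div_eq_mul_inv,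
            mul_assoc]
        rw [hX]
        set Y : ℝ := εi^m * (εj^m * D^(-m)) with hYdef
        have hY : 0 ≤ Y := by
          rw [hYdef]
          exact mul_nonneg (Real.rpow_nonneg hεi.le _)
            (mul_nonneg (Real.rpow_nonneg hεj.le _) (Real.rpow_nonneg hD.le _))
        have hMle : Mval ≤ ((4:ℝ)^m * c₁) * Y := by
          have hρ2m : (ρ^2)^(-m) = 4^m * D^(-m) := by
            rw [hρ2, Real.rpow_neg (div_nonneg hD.le (by norm_num)),
              Real.div_rpow hD.le (by norm_num),
              inv_div, div_eq_mul_inv, ← Real.rpow_neg hD.le]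
          rw [hMvaldef, hK2def, hρ2m, hYdef]
          refine le_of_eq ?_
          ring
        have hNle : Nval ≤ ((25:ℝ)^s * 2^((n:ℝ)-4) * V * 2/16) * Y := by
          have hρ4 : ρ^4 = D^2/16 := by
            rw [show ρ^4 = (ρ^2)^2 by ring, hρ2]; ring
          have hεjs : εj^s = εj^m * εj^((4:ℝ)) := by
            rw [← Real.rpow_add hεj]
            congr 1
            rw [hsdef, hmdef]; ring
          have hDs : D^(-s) = D^(-m) * D^(-(4:ℝ)) := by
            rw [← Real.rpow_add hD]
            congr 1
            rw [hsdef, hmdef]; ring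
          have hεj4 : εj^((4:ℝ)) ≤ D^2 := by
            have h1 : εj^((4:ℝ)) = (εj^2)^2 := by
              rw [show ((4:ℝ)) = ((4:ℕ):ℝ) by norm_num, Real.rpow_natCast]; ring
            rw [h1]
            have h2 : εj^2 ≤ D := by rw [hDdef]; nlinarith [sq_nonneg ‖p - q‖]
            exact pow_le_pow_left₀ (sq_nonneg εj) h2 2
          have hDD : D^2 * D^(-(4:ℝ)) * D^2 = 1 := by
            rw [show D^2 * D^(-(4:ℝ)) * D^2 = D^2 * D^2 * D^(-(4:ℝ)) by ring, ← pow_add,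
              show (2+2 : ℕ) = 4 from rfl, ← Real.rpow_natCast D 4, ← Real.rpow_add hD]
            norm_num
          have hco : (0:ℝ) ≤ ((25:ℝ)^s * 2^((n:ℝ)-4) * V * 2/16) * Y * D^(-(4:ℝ)) * D^2 :=
            mul_nonneg (mul_nonneg (mul_nonneg hCoef2 hY) (Real.rpow_nonneg hD.le _))
              (sq_nonneg D)
          calc Nval = (((25:ℝ)^s * 2^((n:ℝ)-4) * V * 2/16) * Y * D^(-(4:ℝ)) * D^2)
                * εj^((4:ℝ)) := by
                rw [hNvaldef, hK1def, hρ4, hεjs, hDs, hYdef]; ring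
            _ ≤ (((25:ℝ)^s * 2^((n:ℝ)-4) * V * 2/16) * Y * D^(-(4:ℝ)) * D^2) * D^2 :=
                mul_le_mul_of_nonneg_left hεj4 hco
            _ = ((25:ℝ)^s * 2^((n:ℝ)-4) * V * 2/16) * Y * (D^2 * D^(-(4:ℝ)) * D^2) := by
                ring
            _ = ((25:ℝ)^s * 2^((n:ℝ)-4) * V * 2/16) * Y := by rw [hDD, mul_one]
        calc Nval + Mval
            ≤ ((25:ℝ)^s * 2^((n:ℝ)-4) * V * 2/16) * Y + ((4:ℝ)^m * c₁) * Y :=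
              add_le_add hNle hMle
          _ = ((4:ℝ)^m * c₁ + (25:ℝ)^s * 2^((n:ℝ)-4) * V * 2/16) * Y := by ring
          _ ≤ C * Y := by
              refine mul_le_mul_of_nonneg_right ?_ hY
              rw [hCdef]; linarith
end
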